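/- arXiv:2510.02950 — 6 statements merged into one kernel-verified Lean document; each statement's English description precedes it below -/
import Mathlib

section
/- An arborescence forest F of a digraph G is maximum (has maximum arc cardinality among all arborescence forests of G) if and only if there do not exist two distinct roots r and r' of F such that G contains a directed path from r to r'. -/
open Finset

variable {V : Type*} [Fintype V] [DecidableEq V]

/-- The in-degree of a vertex `v` in the digraph with arc set `F`. -/
def inDeg (F : Finset (V × V)) (v : V) : ℕ := (F.filter fun a => a.2 = v).card

/-- A root is a vertex of in-degree `0`. -/
def IsRoot (F : Finset (V × V)) (v : V) : Prop := inDeg F v = 0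

/-- `F` is acyclic when arc directions are forgotten (no loops, no antiparallel
pairs, and the underlying simple graph is acyclic). -/
def UndirAcyclic (F : Finset (V × V)) : Prop :=
  (∀ a ∈ F, a.1 ≠ a.2 ∧ (a.2, a.1) ∉ F) ∧
  (SimpleGraph.fromRel fun u v => (u, v) ∈ F).IsAcyclic

/-- An arborescence forest: every vertex has in-degree at most `1`, and the
graph is acyclic ignoring directions. -/
def IsArbForest (F : Finset (V × V)) : Prop :=
  (∀ v, inDeg F v ≤ 1) ∧ UndirAcyclic F

/-- A maximum arborescence forest of `G`: an arborescence forest `F ⊆ G` of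
maximum arc cardinality. -/
def IsMaxArbForest (G F : Finset (V × V)) : Prop :=
  F ⊆ G ∧ IsArbForest F ∧ ∀ F' ⊆ G, IsArbForest F' → F'.card ≤ F.card

/-- Directed reachability in arc set `G`. -/
def Reach (G : Finset (V × V)) (u v : V) : Prop :=
  Relation.ReflTransGen (fun x y => (x, y) ∈ G) u v

/-- Weak reachability: `u` and `v` are in the same weakly connected component. -/
def WReach (F : Finset (V × V)) (u v : V) : Prop :=
  Relation.ReflTransGen (fun x y => (x, y) ∈ F ∨ (y, x) ∈ F) u v

/-- A directed path in `G`, given as its (duplicate-free) list of vertices. -/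
def IsDiPath (G : Finset (V × V)) (p : List V) : Prop :=
  p.Chain' (fun u v => (u, v) ∈ G) ∧ p.Nodup

/-- The arcs of a path given as a vertex list. -/
def pathArcs (p : List V) : Finset (V × V) := (p.zip p.tail).toFinset

/-- `UPDATE(F, P)`: remove the parent arcs (all in-arcs) of every vertex of the
path `p` other than its first vertex, and add the arcs of `p`. -/
def update (F : Finset (V × V)) (p : List V) : Finset (V × V) :=
  (F.filter fun a => a.2 ∉ p.tail) ∪ pathArcs p

/-- A feasible path for `F` from root `r` to root `r'` in `G`: a directed path
`p = p₁ ++ p₂` from `r` to `r'` such that all arcs of `p₁` belong to the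
arborescence (weak component) of `r` in `F` and all vertices of `p₂` belong to
the arborescence of `r'` in `F`. -/
def FeasiblePath (G F : Finset (V × V)) (r r' : V) (p : List V) : Prop :=
  IsDiPath G p ∧ p.head? = some r ∧ p.getLast? = some r' ∧
  ∃ p₁ p₂ : List V, p = p₁ ++ p₂ ∧
    (∀ a ∈ pathArcs p₁, a ∈ F ∧ WReach F r a.1 ∧ WReach F r a.2) ∧
    (∀ v ∈ p₂, WReach F r' v)

/-!
An arborescence forest on `V` has `|V| - #roots` arcs, so it is maximum iff it has as few roots
as possible.

If a root `r` reaches another root `r'` in `G`, walk along a `G`-path from `r`. At each arc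
`(u, w)` whose head `w` is not yet in the arborescence of `r`, replace the parent arc of `w` by
`(u, w)`: the result is again an arborescence forest with no fewer arcs, and `r` now reaches `w`.
The first time `w` is a root (at the latest at `r'`), two arborescences merge and an arc is gained.

Conversely, if no root of `F` reaches another root of `F` in `G`, send each root of `F` to a root
of `F'` above it. This is injective: a root of `F` above the common image reaches both preimages
in `G`, so equals both. Hence `F'` has at least as many roots as `F`.
-/

set_option linter.unusedSectionVars false

open SimpleGraph

instance (F : Finset (V × V)) : DecidablePred (IsRoot F) := fun v =>
  inferInstanceAs (Decidable (inDeg F v = 0))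

theorem Relation.ReflTransGen.restrict_ne {α : Type*} {R : α → α → Prop} {a b : α}
    (h : Relation.ReflTransGen R a b) :
    Relation.ReflTransGen (fun x y => R x y ∧ x ≠ b) a b := by
  induction h using Relation.ReflTransGen.head_induction_on with
  | refl => exact .refl
  | @head x y hxy _ ih =>
    by_cases hx : x = b
    · exact hx ▸ .refl
    · exact .head ⟨hxy, hx⟩ ih

section ArbForest

variable {F : Finset (V × V)}

theorem not_isRoot_iff {v : V} : ¬ IsRoot F v ↔ ∃ p, (p, v) ∈ F := by
  simp [IsRoot, inDeg, Finset.card_eq_zero, Finset.filter_eq_empty_iff]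

theorem IsRoot.arc_notMem {r : V} (hr : IsRoot F r) (a : V) : (a, r) ∉ F :=
  fun h => not_isRoot_iff.2 ⟨a, h⟩ hr

theorem eq_of_arc_mem_of_inDeg_le_one {a b v : V} (hv : inDeg F v ≤ 1) (ha : (a, v) ∈ F)
    (hb : (b, v) ∈ F) : a = b :=
  congrArg Prod.fst <| Finset.card_le_one.1 hv _ (Finset.mem_filter.2 ⟨ha, rfl⟩) _
    (Finset.mem_filter.2 ⟨hb, rfl⟩)

theorem Reach.mono {G : Finset (V × V)} {u v : V} (hFG : F ⊆ G) (h : Reach F u v) :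
    Reach G u v :=
  Relation.ReflTransGen.mono (fun _ _ hxy => hFG hxy) _ _ h

theorem Reach.wreach {u v : V} (h : Reach F u v) : WReach F u v :=
  Relation.ReflTransGen.mono (fun _ _ => Or.inl) _ _ h

theorem wreach_of_reachable {u v : V}
    (h : (fromRel fun x y => (x, y) ∈ F).Reachable u v) : WReach F u v :=
  Relation.ReflTransGen.mono (fun _ _ hxy => ((fromRel_adj _ _ _).1 hxy).2) _ _
    ((reachable_iff_reflTransGen u v).1 h)

theorem IsRoot.reach_of_wreach (hdeg : ∀ v, inDeg F v ≤ 1) {r v : V} (hr : IsRoot F r)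
    (h : WReach F r v) : Reach F r v := by
  induction h with
  | refl => exact .refl
  | @tail b c _ hbc ih =>
    rcases hbc with hbc | hcb
    · exact ih.tail hbc
    · -- `c` is the parent of `b`, so it lies on the path from `r` to `b`
      rcases ih.cases_tail with rfl | ⟨y, hry, hyb⟩
      · exact absurd hcb (hr.arc_notMem c)
      · exact eq_of_arc_mem_of_inDeg_le_one (hdeg b) hyb hcb ▸ hry

theorem UndirAcyclic.mono {F' : Finset (V × V)} (hF : UndirAcyclic F) (h : F' ⊆ F) :
    UndirAcyclic F' :=
  ⟨fun a ha => ⟨(hF.1 a (h ha)).1, fun h' => (hF.1 a (h ha)).2 (h h')⟩,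
    hF.2.anti fun _ _ hxy => (fromRel_adj _ _ _).2
      ⟨((fromRel_adj _ _ _).1 hxy).1, ((fromRel_adj _ _ _).1 hxy).2.imp (@h _) (@h _)⟩⟩

theorem UndirAcyclic.insert_arc {u w : V} (hF : UndirAcyclic F) (huw : ¬ WReach F u w) :
    UndirAcyclic (insert (u, w) F) := by
  have hne : u ≠ w := fun h => huw (h ▸ .refl)
  have hwu : (w, u) ∉ F := fun h => huw (.single (Or.inr h))
  refine ⟨fun ⟨x, y⟩ hxy => ?_, ?_⟩
  · rcases Finset.mem_insert.1 hxy with hxy_new | hxyF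
    · obtain ⟨rfl, rfl⟩ := Prod.mk.inj hxy_new
      exact ⟨hne, fun h => (Finset.mem_insert.1 h).elim (fun h => hne (Prod.mk.inj h).2) hwu⟩
    · refine ⟨(hF.1 _ hxyF).1, fun hyx => ?_⟩
      rcases Finset.mem_insert.1 hyx with hyx_new | hyxF
      · obtain ⟨rfl, rfl⟩ := Prod.mk.inj hyx_new
        exact hwu hxyF
      · exact (hF.1 _ hxyF).2 hyxF
  · have hle : (fromRel fun x y => (x, y) ∈ insert (u, w) F) ≤
        (fromRel fun x y => (x, y) ∈ F) ⊔ edge u w := by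
      intro x y hxy
      simp only [fromRel_adj, Finset.mem_insert, Prod.mk.injEq, sup_adj, edge_adj] at hxy ⊢
      tauto
    exact (hF.2.sup_edge_of_not_reachable fun h => huw (wreach_of_reachable h)).anti hle

theorem UndirAcyclic.not_reach_of_arc_mem {u v : V} (hF : UndirAcyclic F) (huv : (u, v) ∈ F) :
    ¬ Reach F v u := by
  intro hvu
  have hadj : (fromRel fun x y => (x, y) ∈ F).Adj u v :=
    (fromRel_adj _ _ _).2 ⟨(hF.1 _ huv).1, Or.inl huv⟩
  refine isAcyclic_iff_forall_adj_isBridge.1 hF.2 hadj (Reachable.symm ?_)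
  -- a directed path from `v` to `u` that never leaves `u` avoids the edge `uv`
  refine (reachable_iff_reflTransGen _ _).2 (Relation.ReflTransGen.mono
    (fun x y ⟨hxy, hxu⟩ => ?_) _ _ hvu.restrict_ne)
  refine deleteEdges_adj.2 ⟨(fromRel_adj _ _ _).2 ⟨(hF.1 _ hxy).1, Or.inl hxy⟩, ?_⟩
  rintro h
  rcases Sym2.eq_iff.1 (Set.mem_singleton_iff.1 h) with ⟨rfl, -⟩ | ⟨rfl, rfl⟩
  · exact hxu rfl
  · exact (hF.1 _ huv).2 hxy

theorem UndirAcyclic.wellFounded (hF : UndirAcyclic F) : WellFounded fun x y => (x, y) ∈ F := by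
  have : Std.Irrefl (Relation.TransGen fun x y => (x, y) ∈ F) := ⟨fun x hx => by
    obtain ⟨y, hxy, hyx⟩ := Relation.TransGen.tail'_iff.1 hx
    exact hF.not_reach_of_arc_mem hyx hxy⟩
  exact Subrelation.wf (fun h => Relation.TransGen.single h)
    (Finite.wellFounded_of_trans_of_irrefl (Relation.TransGen fun x y => (x, y) ∈ F))

theorem IsArbForest.exists_isRoot_reach (hF : IsArbForest F) (v : V) :
    ∃ r, IsRoot F r ∧ Reach F r v := by
  induction v using hF.2.wellFounded.induction with
  | _ v ih =>
    by_cases hv : IsRoot F v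
    · exact ⟨v, hv, .refl⟩
    obtain ⟨p, hp⟩ := not_isRoot_iff.1 hv
    obtain ⟨r, hr, hrp⟩ := ih p hp
    exact ⟨r, hr, hrp.tail hp⟩

theorem card_add_card_filter_isRoot (hdeg : ∀ v, inDeg F v ≤ 1) :
    F.card + (univ.filter (IsRoot F)).card = Fintype.card V := by
  have hinj : Set.InjOn Prod.snd (F : Set (V × V)) := fun a ha b hb hab => by
    have hb' : (b.1, a.2) ∈ F := hab ▸ hb
    exact Prod.ext (eq_of_arc_mem_of_inDeg_le_one (hdeg a.2) ha hb') hab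
  have himage : F.image Prod.snd = univ.filter fun v => ¬ IsRoot F v := by
    ext v
    simp [not_isRoot_iff]
  rw [← Finset.card_image_of_injOn hinj, himage, add_comm,
    Finset.card_filter_add_card_filter_not, Finset.card_univ]

end ArbForest

section Update

variable {F : Finset (V × V)} {u w : V}

theorem update_pair (F : Finset (V × V)) (u w : V) :
    update F [u, w] = insert (u, w) (F.filter fun a => a.2 ≠ w) := by
  ext a
  simp [update, pathArcs, or_comm]

theorem inDeg_update_pair (x : V) :
    inDeg (update F [u, w]) x = if x = w then 1 else inDeg F x := by
  by_cases hx : x = w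
  · subst hx
    simp [update_pair, inDeg, Finset.filter_insert, Finset.filter_filter]
  · simp only [inDeg, update_pair, ne_eq, filter_insert, Ne.symm hx, ↓reduceIte, filter_filter,
      hx]
    congr 1
    exact Finset.filter_congr fun a _ => and_iff_right_of_imp fun h => h ▸ hx

theorem card_update_pair_add_inDeg (F : Finset (V × V)) (u w : V) :
    (update F [u, w]).card + inDeg F w = F.card + 1 := by
  have := Finset.card_filter_add_card_filter_not (s := F) (fun a : V × V => a.2 = w)
  rw [update_pair, Finset.card_insert_of_notMem (by simp), inDeg]
  simp only [ne_eq] at *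
  omega

theorem IsRoot.update_pair {x : V} (hx : IsRoot F x) (hxw : x ≠ w) :
    IsRoot (update F [u, w]) x := by
  rwa [IsRoot, inDeg_update_pair, if_neg hxw]

theorem IsArbForest.update_pair (hF : IsArbForest F) (huw : ¬ WReach F u w) :
    IsArbForest (update F [u, w]) := by
  refine ⟨fun x => ?_, (hF.2.insert_arc huw).mono ?_⟩
  · rw [inDeg_update_pair]
    split_ifs
    exacts [le_rfl, hF.1 x]
  · rw [_root_.update_pair]
    exact Finset.insert_subset_insert _ (Finset.filter_subset _ _)

theorem reach_update_pair {r x : V} (hrw : ¬ Reach F r w) (hrx : Reach F r x) :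
    Reach (update F [u, w]) r x := by
  induction hrx with
  | refl => exact .refl
  | @tail y z hry hyz ih =>
    have hzw : z ≠ w := fun h => hrw (h ▸ hry.tail hyz)
    refine ih.tail ?_
    rw [_root_.update_pair]
    exact Finset.mem_insert_of_mem (Finset.mem_filter.2 ⟨hyz, hzw⟩)

end Update

theorem card_le_of_forall_isRoot_reach {G F F' : Finset (V × V)} (hF : IsArbForest F)
    (hFG : F ⊆ G) (hF' : IsArbForest F') (hF'G : F' ⊆ G)
    (hroots : ∀ r r', IsRoot F r → IsRoot F r' → Reach G r r' → r = r') :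
    F'.card ≤ F.card := by
  choose ψ hψ_root hψ_reach using hF'.exists_isRoot_reach
  have hψ_inj : Set.InjOn ψ (univ.filter (IsRoot F) : Set V) := fun r hr r' hr' hψ => by
    simp only [Finset.coe_filter, Finset.mem_univ, true_and] at hr hr'
    obtain ⟨ρ, hρ, hρψ⟩ := hF.exists_isRoot_reach (ψ r)
    have hρr : Reach G ρ r := (hρψ.mono hFG).trans ((hψ_reach r).mono hF'G)
    have hρr' : Reach G ρ r' := (hρψ.mono hFG).trans (hψ ▸ (hψ_reach r').mono hF'G)
    exact (hroots ρ r hρ hr hρr).symm.trans (hroots ρ r' hρ hr' hρr')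
  have hcard : (univ.filter (IsRoot F)).card ≤ (univ.filter (IsRoot F')).card :=
    Finset.card_le_card_of_injOn ψ (fun r _ => by simpa using hψ_root r) hψ_inj
  have := card_add_card_filter_isRoot hF.1
  have := card_add_card_filter_isRoot hF'.1
  omega

theorem exists_card_lt_of_reach {G F : Finset (V × V)} {r r' u : V} (hF : IsArbForest F)
    (hFG : F ⊆ G) (hrr' : r ≠ r') (hr : IsRoot F r) (hr' : IsRoot F r') (hru : Reach F r u)
    (hur' : Reach G u r') : ∃ F' ⊆ G, IsArbForest F' ∧ F.card < F'.card := by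
  induction hur' using Relation.ReflTransGen.head_induction_on generalizing F with
  | refl =>
    rcases hru.cases_tail with rfl | ⟨y, -, hyr'⟩
    · exact absurd rfl hrr'
    · exact absurd hyr' (hr'.arc_notMem y)
  | @head u w huw _ ih =>
    by_cases hrw : Reach F r w
    · exact ih hF hFG hr hr' hrw
    have huw_F : ¬ WReach F u w := fun h => hrw (hr.reach_of_wreach hF.1 (hru.wreach.trans h))
    have hF₁G : update F [u, w] ⊆ G := by
      rw [update_pair]
      exact Finset.insert_subset huw ((Finset.filter_subset _ _).trans hFG)
    have hcard := card_update_pair_add_inDeg F u w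
    by_cases hw : IsRoot F w
    · exact ⟨_, hF₁G, hF.update_pair huw_F, by rw [IsRoot] at hw; omega⟩
    -- `w` keeps its in-degree `1`, so the roots and the number of arcs are unchanged
    have hw₁ : inDeg F w = 1 := le_antisymm (hF.1 w) (Nat.one_le_iff_ne_zero.2 hw)
    have hrw₁ : Reach (update F [u, w]) r w := by
      refine (reach_update_pair hrw hru).tail ?_
      rw [update_pair]
      exact Finset.mem_insert_self _ _
    obtain ⟨F', hF'G, hF', hlt⟩ := ih (hF.update_pair huw_F) hF₁G
      (hr.update_pair fun h => hw (h ▸ hr)) (hr'.update_pair fun h => hw (h ▸ hr')) hrw₁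
    exact ⟨F', hF'G, hF', by omega⟩

/-- An arborescence forest `F` of a digraph `G` is maximum iff there are no two
distinct roots `r ≠ r'` of `F` with a directed path from `r` to `r'` in `G`. -/
theorem stmt0 (G F : Finset (V × V)) (hF : IsArbForest F) (hFG : F ⊆ G) :
    IsMaxArbForest G F ↔
      ¬ ∃ r r' : V, r ≠ r' ∧ IsRoot F r ∧ IsRoot F r' ∧ Reach G r r' := by
  constructor
  · rintro ⟨-, -, hmax⟩ ⟨r, r', hrr', hr, hr', hrr'_G⟩
    obtain ⟨F', hF'G, hF', hlt⟩ := exists_card_lt_of_reach hF hFG hrr' hr hr' .refl hrr'_G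
    exact (hmax F' hF'G hF').not_gt hlt
  · intro hno
    refine ⟨hFG, hF, fun F' hF'G hF' => card_le_of_forall_isRoot_reach hF hFG hF' hF'G ?_⟩
    intro r r' hr hr' hrr'
    by_contra hne
    exact hno ⟨r, r', hne, hr, hr', hrr'⟩
end

section
/- Let F be an arborescence forest of a digraph G and let P ⊆ G be a directed path between two distinct roots r and r' of F. Then UPDATE(F, P) := (F \ ⋃_{internal vertices v of P and v = r'} parent_F(v)) ∪ P is again an arborescence forest of G, where parent_F(v) denotes the unique in-arc of v in F (if it exists). -/
open Finset

variable {V : Type*} [Fintype V] [DecidableEq V]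

/-!
With in-degrees at most one, acyclicity ignoring directions amounts to having no directed
cycle: on an undirected cycle, a vertex from which no arc of `F` leads back into the cycle
would have both of its cycle neighbours as parents. After the update, `r` is still a root
and every later vertex of the path has its predecessor on the path as its only parent, so
no directed cycle meets the path, and a directed cycle avoiding the path consists of arcs
of `F`.
-/

namespace Relation

variable {β : Type*} {r s : β → β → Prop}

theorem ReflTransGen.source_ne_target {a b : β} (h : ReflTransGen r a b) :
    ReflTransGen (fun x y => r x y ∧ x ≠ b) a b := by
  induction h using ReflTransGen.head_induction_on with
  | refl => exact .refl
  | @head a c hac _ ih =>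
    by_cases hab : a = b
    · rw [hab]
    · exact .head ⟨hac, hab⟩ ih

theorem TransGen.exists_pred_on_cycle {v : β} (h : TransGen r v v) :
    ∃ u, r u v ∧ TransGen r u u := by
  obtain ⟨u, hvu, huv⟩ := TransGen.tail'_iff.mp h
  exact ⟨u, huv, .head' huv hvu⟩

theorem TransGen.cycle_mono (h : ∀ x y, r x y → TransGen r y y → s x y) {v : β}
    (hv : TransGen r v v) : TransGen s v v := by
  suffices ∀ w, TransGen r v w → TransGen r w v → TransGen s v w from this v hv hv
  intro w hvw
  induction hvw with
  | single hvw => exact fun hwv => .single (h _ _ hvw (hwv.tail hvw))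
  | tail hvb hbc ih =>
    exact fun hcv => (ih (.head hbc hcv)).tail (h _ _ hbc ((hcv.trans hvb).tail hbc))

end Relation

open SimpleGraph

section ArcSets

variable {α : Type*}

def DirAcyclic (F : Finset (α × α)) : Prop :=
  ∀ v, ¬ Relation.TransGen (fun x y => (x, y) ∈ F) v v

variable {F : Finset (α × α)}

theorem UndirAcyclic.dirAcyclic (hF : UndirAcyclic F) : DirAcyclic F := by
  obtain ⟨hsimple, hacyc⟩ := hF
  intro v hv
  obtain ⟨b, hvb, hbv⟩ := Relation.TransGen.tail'_iff.mp hv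
  have hadj : (fromRel fun x y => (x, y) ∈ F).Adj b v :=
    fromRel_adj _ _ _ |>.mpr ⟨(hsimple _ hbv).1, .inl hbv⟩
  refine isAcyclic_iff_forall_adj_isBridge.mp hacyc hadj (reachable_comm.mp ?_)
  rw [reachable_iff_reflTransGen]
  refine Relation.ReflTransGen.mono (fun x y hxy => ?_) _ _ hvb.source_ne_target
  obtain ⟨hxy, hxb⟩ := hxy
  refine deleteEdges_adj .. |>.mpr
    ⟨fromRel_adj _ _ _ |>.mpr ⟨(hsimple _ hxy).1, .inl hxy⟩, ?_⟩
  intro hedge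
  simp only [Set.mem_singleton_iff, Sym2.eq_iff] at hedge
  rcases hedge with ⟨rfl, -⟩ | ⟨rfl, rfl⟩
  · exact hxb rfl
  · exact (hsimple _ hxy).2 hbv

variable [DecidableEq α]

theorem inDeg_le_one_iff {v : α} :
    inDeg F v ≤ 1 ↔ ∀ a b, (a, v) ∈ F → (b, v) ∈ F → a = b := by
  rw [inDeg, Finset.card_le_one]
  constructor
  · intro h a b ha hb
    simpa using h (a, v) (by simp [ha]) (b, v) (by simp [hb])
  · rintro h ⟨a, _⟩ ha ⟨b, _⟩ hb
    simp only [Finset.mem_filter] at ha hb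
    obtain ⟨ha, rfl⟩ := ha
    obtain ⟨hb, rfl⟩ := hb
    rw [h a b ha hb]

theorem undirAcyclic_of_inDeg_le_one [Finite α] (hdeg : ∀ v, inDeg F v ≤ 1)
    (hF : DirAcyclic F) : UndirAcyclic F := by
  refine ⟨fun ⟨a, b⟩ hab => ⟨?_, fun hba => hF a (.tail (.single hab) hba)⟩, ?_⟩
  · rintro (rfl : a = b)
    exact hF a (.single hab)
  intro u c hc
  have : IsTrans α (fun a b => Relation.TransGen (fun x y => (x, y) ∈ F) b a) :=
    ⟨fun _ _ _ hab hbc => hbc.trans hab⟩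
  have : Std.Irrefl (fun a b => Relation.TransGen (fun x y => (x, y) ∈ F) b a) := ⟨hF⟩
  -- `m` has no `F`-path to another vertex of the cycle, so both its cycle neighbours are parents
  obtain ⟨m, hm, hm_sink⟩ := (Finite.wellFounded_of_trans_of_irrefl
    fun a b => Relation.TransGen (fun x y => (x, y) ∈ F) b a).has_min
    {x | x ∈ c.support} ⟨u, c.start_mem_support⟩
  set c' := c.rotate m hm
  have hc' : c'.IsCycle := hc.rotate hm
  have hnil : ¬ c'.Nil := hc'.not_nil
  have parent_of_adj : ∀ w ∈ c'.support,
      (fromRel fun x y => (x, y) ∈ F).Adj m w → (w, m) ∈ F := by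
    intro w hw hadj
    refine ((fromRel_adj _ _ _).mp hadj).2.resolve_left fun hmw => ?_
    exact hm_sink w ((c.mem_support_rotate_iff ..).mp hw) (Relation.TransGen.single hmw)
  exact hc'.snd_ne_penultimate <| inDeg_le_one_iff.mp (hdeg m) _ _
    (parent_of_adj _ (c'.getVert_mem_support 1) (c'.adj_snd hnil))
    (parent_of_adj _ (c'.getVert_mem_support _) (c'.adj_penultimate hnil).symm)

theorem isArbForest_iff [Finite α] :
    IsArbForest F ↔ (∀ v, inDeg F v ≤ 1) ∧ DirAcyclic F :=
  ⟨fun h => ⟨h.1, h.2.dirAcyclic⟩, fun h => ⟨h.1, undirAcyclic_of_inDeg_le_one h.1 h.2⟩⟩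

theorem isRoot_iff_forall_notMem {r : α} : IsRoot F r ↔ ∀ x, (x, r) ∉ F := by
  simp only [IsRoot, inDeg, Finset.card_eq_zero, Finset.filter_eq_empty_iff, Prod.forall]
  exact ⟨fun h x hx => h x r hx rfl, fun h a b hab hb => h a (hb ▸ hab)⟩

end ArcSets

section Paths

variable {α : Type*} [DecidableEq α] {F G : Finset (α × α)} {p : List α}

theorem mem_pathArcs_iff {a b : α} :
    (a, b) ∈ pathArcs p ↔ ∃ i, ∃ h : i + 1 < p.length, p[i] = a ∧ p[i + 1] = b := by
  simp [pathArcs, List.mem_iff_getElem, Nat.lt_sub_iff_add_lt]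

theorem snd_mem_tail_of_mem_pathArcs {a b : α} (h : (a, b) ∈ pathArcs p) : b ∈ p.tail :=
  (List.of_mem_zip (List.mem_toFinset.mp h)).2

theorem pathArcs_subset (hp : p.IsChain fun u v => (u, v) ∈ G) : pathArcs p ⊆ G := by
  rintro ⟨a, b⟩ hab
  obtain ⟨i, hi, rfl, rfl⟩ := mem_pathArcs_iff.mp hab
  exact List.isChain_iff_getElem.mp hp i hi

theorem List.Nodup.eq_of_mem_pathArcs (hp : p.Nodup) {a b v : α} (ha : (a, v) ∈ pathArcs p)
    (hb : (b, v) ∈ pathArcs p) : a = b := by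
  obtain ⟨i, hi, rfl, hiv⟩ := mem_pathArcs_iff.mp ha
  obtain ⟨j, hj, rfl, hjv⟩ := mem_pathArcs_iff.mp hb
  obtain rfl : i = j := by simpa using hp.getElem_inj_iff.mp (hiv.trans hjv.symm)
  rfl

theorem mem_pathArcs_of_mem_update {x y : α} (h : (x, y) ∈ update F p) (hy : y ∈ p.tail) :
    (x, y) ∈ pathArcs p := by
  simp_all [update]

theorem mem_of_mem_update {x y : α} (h : (x, y) ∈ update F p) (hy : y ∉ p.tail) :
    (x, y) ∈ F := by
  rcases Finset.mem_union.mp h with h | h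
  · exact (Finset.mem_filter.mp h).1
  · exact absurd (snd_mem_tail_of_mem_pathArcs h) hy

theorem update_subset (hFG : F ⊆ G) (hp : IsDiPath G p) : update F p ⊆ G :=
  Finset.union_subset ((Finset.filter_subset _ _).trans hFG) (pathArcs_subset hp.1)

theorem inDeg_update_le_one (hF : ∀ v, inDeg F v ≤ 1) (hp : p.Nodup) (v : α) :
    inDeg (update F p) v ≤ 1 := by
  refine inDeg_le_one_iff.mpr fun a b ha hb => ?_
  by_cases hv : v ∈ p.tail
  · exact hp.eq_of_mem_pathArcs (mem_pathArcs_of_mem_update ha hv)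
      (mem_pathArcs_of_mem_update hb hv)
  · exact inDeg_le_one_iff.mp (hF v) a b (mem_of_mem_update ha hv) (mem_of_mem_update hb hv)

theorem not_transGen_update_getElem {r : α} {t : List α} (hr : IsRoot F r)
    (hp : (r :: t).Nodup) : ∀ i (hi : i < (r :: t).length),
      ¬ Relation.TransGen (fun x y => (x, y) ∈ update F (r :: t)) (r :: t)[i] (r :: t)[i]
  | 0, _, hcyc => by
    obtain ⟨u, hu, -⟩ := hcyc.exists_pred_on_cycle
    exact isRoot_iff_forall_notMem.mp hr u (mem_of_mem_update hu (List.nodup_cons.mp hp).1)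
  | i + 1, hi, hcyc => by
    obtain ⟨u, hu, hucyc⟩ := hcyc.exists_pred_on_cycle
    have hu_eq : u = (r :: t)[i] :=
      hp.eq_of_mem_pathArcs (mem_pathArcs_of_mem_update hu (List.getElem_mem _))
        (mem_pathArcs_iff.mpr ⟨i, hi, rfl, rfl⟩)
    exact not_transGen_update_getElem hr hp i (by omega) (hu_eq ▸ hucyc)

theorem dirAcyclic_update {r : α} {t : List α} (hF : DirAcyclic F) (hr : IsRoot F r)
    (hp : (r :: t).Nodup) : DirAcyclic (update F (r :: t)) := by
  intro v hv
  refine hF v (hv.cycle_mono fun x y hxy hy => mem_of_mem_update hxy fun hyt => ?_)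
  obtain ⟨i, hi, rfl⟩ := List.mem_iff_getElem.mp (List.mem_cons_of_mem r hyt)
  exact not_transGen_update_getElem hr hp i hi hy

end Paths

theorem stmt1_general (G F : Finset (V × V)) (p : List V) (r : V)
    (hF : IsArbForest F) (hFG : F ⊆ G)
    (hp : IsDiPath G p) (hhead : p.head? = some r) (hr : IsRoot F r) :
    IsArbForest (update F p) ∧ update F p ⊆ G := by
  obtain ⟨t, rfl⟩ := List.head?_eq_some_iff.mp hhead
  obtain ⟨hdeg, hacyc⟩ := isArbForest_iff.mp hF
  exact ⟨isArbForest_iff.mpr ⟨inDeg_update_le_one hdeg hp.2, dirAcyclic_update hacyc hr hp.2⟩,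
    update_subset hFG hp⟩

/-- `UPDATE(F, P)` along a directed path `P ⊆ G` between two distinct roots of
an arborescence forest `F` of `G` is again an arborescence forest of `G`. -/
theorem stmt1 (G F : Finset (V × V)) (p : List V) (r r' : V)
    (hF : IsArbForest F) (hFG : F ⊆ G)
    (hp : IsDiPath G p) (hhead : p.head? = some r) (hlast : p.getLast? = some r')
    (hrr : r ≠ r') (hr : IsRoot F r) (hr' : IsRoot F r') :
    IsArbForest (update F p) ∧ update F p ⊆ G :=
  stmt1_general G F p r hF hFG hp hhead hr
end

section
/- Let F be a maximum arborescence forest of digraph G = (V, A), and let a ∉ A be an arc. If G + a contains a directed path between two distinct roots of F, then G + a contains a feasible path for F: a directed path from some root r to some other root r' of the form P_A ⊕ P_V where all arcs of P_A lie in the arborescence of r in F and all vertices of P_V lie in the arborescence of r' in F. -/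
/-!
Follow a directed path from `r` to `r'` in `G + a` and look at the last arc `(x, y)` by which it
enters the arborescence `T'` of `r'`, so that the rest of the path stays inside `T'`. If the path
never leaves `T'`, it is feasible as it stands, with an empty `P_A`. Otherwise `x ∉ T'`, and
walking up the parent arcs of `F` from `x` (this terminates, since an arborescence forest has no
directed cycle) yields an `F`-path from the root `ρ` of the arborescence of `x` that avoids `T'`;
followed by `(x, y)` and the rest of the path, it is a feasible path from `ρ ≠ r'` to `r'`.
-/

open Finset

variable {V : Type*} [Fintype V] [DecidableEq V]

namespace List.IsChain

variable {α : Type*} {R : α → α → Prop} {l : List α} {a : α}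

theorem rel_of_mem_zip_tail :
    ∀ {l : List α}, l.IsChain R → ∀ {e}, e ∈ l.zip l.tail → R e.1 e.2
  | [], _, _, h => by simp at h
  | [_], _, _, h => by simp at h
  | _ :: _ :: _, hc, _, h => by
    rw [isChain_cons_cons] at hc
    rcases List.mem_cons.1 h with rfl | h
    · exact hc.1
    · exact rel_of_mem_zip_tail hc.2 h

theorem reflTransGen_of_head?_eq (hl : l.IsChain R) (ha : l.head? = some a) {x : α}
    (hx : x ∈ l) : Relation.ReflTransGen R a x := by
  refine hl.induction _ _ (fun _ _ hr h => h.tail hr) (fun hne => ?_) x hx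
  rw [List.head?_eq_some_head hne, Option.some.injEq] at ha
  exact ha ▸ .refl

theorem reflTransGen_of_getLast?_eq (hl : l.IsChain R) (ha : l.getLast? = some a) {x : α}
    (hx : x ∈ l) : Relation.ReflTransGen R x a := by
  refine hl.backwards_induction _ _ (fun _ _ hr h => Relation.ReflTransGen.head hr h)
    (fun hne => ?_) x hx
  rw [List.getLast?_eq_some_getLast hne, Option.some.injEq] at ha
  exact ha ▸ .refl

end List.IsChain

namespace Relation.ReflTransGen

variable {α : Type*} {R : α → α → Prop} {a b : α}

theorem restrict_ne_source (h : ReflTransGen R a b) :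
    ReflTransGen (fun x y => R x y ∧ y ≠ a) a b := by
  induction h with
  | refl => exact .refl
  | @tail c d _ hcd ih =>
    by_cases hd : d = a
    · exact hd ▸ .refl
    · exact ih.tail ⟨hcd, hd⟩

theorem exists_last_entry {P : α → Prop} (h : ReflTransGen R a b) (hb : P b) :
    (P a ∧ ReflTransGen (fun x y => R x y ∧ P y) a b) ∨
      ∃ x y, ¬ P x ∧ R x y ∧ P y ∧ ReflTransGen (fun x y => R x y ∧ P y) y b := by
  induction h using head_induction_on with
  | refl => exact .inl ⟨hb, .refl⟩
  | @head a c hac _ ih =>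
    rcases ih with ⟨hc, hcb⟩ | hexit
    · by_cases ha : P a
      · exact .inl ⟨ha, .head ⟨hac, hc⟩ hcb⟩
      · exact .inr ⟨a, c, ha, hac, hc, hcb⟩
    · exact .inr hexit

theorem exists_nodup_isChain (h : ReflTransGen R a b) :
    ∃ l : List α, l.IsChain R ∧ l.Nodup ∧ l.head? = some a ∧ l.getLast? = some b := by
  induction h using head_induction_on with
  | refl => exact ⟨[b], .singleton b, List.nodup_singleton b, rfl, rfl⟩
  | @head a c hac _ ih =>
    obtain ⟨l, hc, hn, hh, hl⟩ := ih
    by_cases ha : a ∈ l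
    · -- shortcut the detour through `a`
      obtain ⟨s, t, rfl⟩ := List.append_of_mem ha
      have hsuf : (a :: t) <:+ s ++ a :: t := List.suffix_append s _
      exact ⟨a :: t, hc.suffix hsuf, hn.sublist hsuf.sublist, rfl,
        by rw [← hl, List.getLast?_append_cons]⟩
    · obtain ⟨t, rfl⟩ : ∃ t, l = c :: t := by
        cases l with
        | nil => simp at hh
        | cons d t => exact ⟨t, by rw [Option.some.inj hh]⟩
      exact ⟨a :: c :: t, hc.cons_cons hac, List.nodup_cons.2 ⟨ha, hn⟩, rfl,
        by rwa [List.getLast?_cons_cons]⟩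

end Relation.ReflTransGen

section Digraph

variable {V : Type*}

theorem Reach.wReach {F : Finset (V × V)} {u v : V} (h : Reach F u v) : WReach F u v :=
  Relation.ReflTransGen.mono (fun _ _ => Or.inl) _ _ h

theorem exists_isDiPath_of_reach {G : Finset (V × V)} {u v : V} (h : Reach G u v) :
    ∃ p, IsDiPath G p ∧ p.head? = some u ∧ p.getLast? = some v :=
  let ⟨p, hc, hn, hu, hv⟩ := Relation.ReflTransGen.exists_nodup_isChain h
  ⟨p, ⟨hc, hn⟩, hu, hv⟩

theorem exists_isDiPath_within {G : Finset (V × V)} {D : V → Prop} {u v : V}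
    (h : Relation.ReflTransGen (fun x y => (x, y) ∈ G ∧ D y) u v) (hu : D u) :
    ∃ p, IsDiPath G p ∧ p.head? = some u ∧ p.getLast? = some v ∧ ∀ x ∈ p, D x := by
  obtain ⟨p, hc, hn, hpu, hpv⟩ := h.exists_nodup_isChain
  refine ⟨p, ⟨hc.imp fun _ _ => And.left, hn⟩, hpu, hpv, fun x hx => ?_⟩
  rcases (hc.reflTransGen_of_head?_eq hpu hx).cases_tail with rfl | ⟨_, _, _, hx⟩
  · exact hu
  · exact hx

theorem IsDiPath.isChain {G : Finset (V × V)} {p : List V} (hp : IsDiPath G p) :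
    p.IsChain fun x y => (x, y) ∈ G :=
  hp.1

theorem IsDiPath.mono {G H : Finset (V × V)} {p : List V} (hGH : G ⊆ H) (hp : IsDiPath G p) :
    IsDiPath H p :=
  ⟨List.IsChain.imp (fun _ _ h => hGH h) hp.1, hp.2⟩

theorem IsDiPath.append {G : Finset (V × V)} {p q : List V} (hp : IsDiPath G p)
    (hq : IsDiPath G q) (hjoin : ∀ x ∈ p.getLast?, ∀ y ∈ q.head?, (x, y) ∈ G)
    (hdisj : ∀ x ∈ p, x ∉ q) : IsDiPath G (p ++ q) :=
  ⟨List.isChain_append.2 ⟨hp.1, hq.1, hjoin⟩,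
    List.nodup_append.2 ⟨hp.2, hq.2, fun x hx _ hy hxy => hdisj x hx (hxy ▸ hy)⟩⟩

namespace IsArbForest

variable [DecidableEq V] {F : Finset (V × V)}

theorem not_transGen_self (hF : IsArbForest F) (v : V) :
    ¬ Relation.TransGen (fun x y => (x, y) ∈ F) v v := by
  rw [Relation.TransGen.head'_iff]
  rintro ⟨w, hvw, hwv⟩
  obtain ⟨hne, hwv_notMem⟩ := hF.2.1 _ hvw
  have hbridge := SimpleGraph.isAcyclic_iff_forall_adj_isBridge.1 hF.2.2
    (SimpleGraph.fromRel_adj _ v w |>.2 ⟨hne, .inl hvw⟩)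
  refine SimpleGraph.isBridge_iff.1 hbridge
    ((SimpleGraph.reachable_iff_reflTransGen _ _).2 ?_).symm
  -- a directed `w`-`v` path that never returns to `w` cannot use the edge `vw`
  refine Relation.ReflTransGen.mono (fun x y ⟨hxy, hyw⟩ => ?_) _ _ hwv.restrict_ne_source
  refine SimpleGraph.deleteEdges_adj.2
    ⟨SimpleGraph.fromRel_adj _ x y |>.2 ⟨(hF.2.1 _ hxy).1, .inl hxy⟩, fun h => ?_⟩
  simp only [Set.mem_singleton_iff, Sym2.eq_iff] at h
  rcases h with ⟨rfl, rfl⟩ | ⟨rfl, rfl⟩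
  · exact hyw rfl
  · exact hwv_notMem hxy

theorem wellFounded [Finite V] (hF : IsArbForest F) : WellFounded fun x y : V => (x, y) ∈ F := by
  have : Std.Irrefl (Relation.TransGen fun x y : V => (x, y) ∈ F) := ⟨hF.not_transGen_self⟩
  have : IsTrans V (Relation.TransGen fun x y : V => (x, y) ∈ F) := ⟨fun _ _ _ => .trans⟩
  exact Subrelation.wf (r := Relation.TransGen _) (fun h => .single h)
    (Finite.wellFounded_of_trans_of_irrefl _)

theorem exists_isRoot_reach_s3 [Finite V] (hF : IsArbForest F) (v : V) :
    ∃ ρ, IsRoot F ρ ∧ Reach F ρ v := by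
  induction v using hF.wellFounded.induction with
  | _ v ih =>
  by_cases hv : IsRoot F v
  · exact ⟨v, hv, .refl⟩
  obtain ⟨⟨u, v'⟩, huv⟩ := Finset.card_ne_zero.1 hv
  simp only [Finset.mem_filter] at huv
  obtain ⟨huv, rfl⟩ := huv
  obtain ⟨ρ, hρ, hρu⟩ := ih u huv
  exact ⟨ρ, hρ, hρu.tail huv⟩

end IsArbForest

theorem FeasiblePath.append [DecidableEq V] {H F : Finset (V × V)} {ρ r' : V} {p s : List V}
    (hFH : F ⊆ H) (hp : IsDiPath F p) (hpρ : p.head? = some ρ) (hs : IsDiPath H s)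
    (hsr' : s.getLast? = some r') (hjoin : ∀ x ∈ p.getLast?, ∀ y ∈ s.head?, (x, y) ∈ H)
    (hsD : ∀ x ∈ s, WReach F r' x) (hpD : ∀ x ∈ p, ¬ WReach F r' x) :
    FeasiblePath H F ρ r' (p ++ s) := by
  have hp_ne : p ≠ [] := by rintro rfl; simp at hpρ
  have hs_ne : s ≠ [] := by rintro rfl; simp at hsr'
  refine ⟨(hp.mono hFH).append hs hjoin fun x hx hxs => hpD x hx (hsD x hxs), ?_, ?_,
    p, s, rfl, fun e he => ?_, hsD⟩
  · rw [List.head?_append_of_ne_nil _ hp_ne, hpρ]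
  · rw [List.getLast?_append_of_ne_nil _ hs_ne, hsr']
  · rw [pathArcs, List.mem_toFinset] at he
    have hρ {x : V} (hx : x ∈ p) : WReach F ρ x :=
      Reach.wReach (hp.isChain.reflTransGen_of_head?_eq hpρ hx)
    exact ⟨hp.isChain.rel_of_mem_zip_tail he, hρ (List.of_mem_zip he).1,
      hρ (List.mem_of_mem_tail (List.of_mem_zip he).2)⟩

end Digraph

theorem stmt3_general (G F : Finset (V × V)) (a : V × V)
    (hF : IsMaxArbForest G F)
    (h : ∃ r r' : V, r ≠ r' ∧ IsRoot F r ∧ IsRoot F r' ∧ Reach (insert a G) r r') :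
    ∃ (r r' : V) (p : List V), r ≠ r' ∧ IsRoot F r ∧ IsRoot F r' ∧
      FeasiblePath (insert a G) F r r' p := by
  obtain ⟨r, r', hrr', hr, hr', hreach⟩ := h
  rcases Relation.ReflTransGen.exists_last_entry (P := WReach F r') hreach .refl with
    ⟨hr_in, hreach'⟩ | ⟨x, y, hx, hxy, hy, hyr'⟩
  · obtain ⟨s, hs, hsr, hsr', hsD⟩ := exists_isDiPath_within hreach' hr_in
    exact ⟨r, r', s, hrr', hr, hr', hs, hsr, hsr', [], s, rfl, by simp [pathArcs], hsD⟩
  · obtain ⟨ρ, hρ, hρx⟩ := hF.2.1.exists_isRoot_reach_s3 x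
    obtain ⟨p, hp, hpρ, hpx⟩ := exists_isDiPath_of_reach hρx
    obtain ⟨s, hs, hsy, hsr', hsD⟩ := exists_isDiPath_within hyr' hy
    have hpD (z : V) (hz : z ∈ p) : ¬ WReach F r' z := fun hz' =>
      hx (hz'.trans (Reach.wReach (hp.isChain.reflTransGen_of_getLast?_eq hpx hz)))
    have hρr' : ρ ≠ r' := fun h => hpD ρ (List.mem_of_mem_head? hpρ) (h ▸ .refl)
    refine ⟨ρ, r', p ++ s, hρr', hρ, hr',
      FeasiblePath.append (hF.1.trans (subset_insert a G)) hp hpρ hs hsr' ?_ hsD hpD⟩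
    simpa [hpx, hsy] using hxy

/-- If adding an arc `a ∉ G` to `G` creates a directed path between two
distinct roots of a maximum arborescence forest `F` of `G`, then `G + a`
contains a feasible path for `F` between two distinct roots. -/
theorem stmt3 (G F : Finset (V × V)) (a : V × V)
    (hF : IsMaxArbForest G F) (ha : a ∉ G)
    (h : ∃ r r' : V, r ≠ r' ∧ IsRoot F r ∧ IsRoot F r' ∧ Reach (insert a G) r r') :
    ∃ (r r' : V) (p : List V), r ≠ r' ∧ IsRoot F r ∧ IsRoot F r' ∧
      FeasiblePath (insert a G) F r r' p :=
  stmt3_general G F a hF h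
end

section
/- For every even integer n ≥ 4 there is a fixed sequence of O(n) arc insertions on an n-vertex digraph (the bidirected path construction) such that every sequence of maximum arborescence forests F^(1), ..., F^(m) maintained after each insertion has total recourse Σ_i |F^(i) \ F^(i+1)| = Ω(n^2). -/
open Finset

variable {V : Type*} [Fintype V] [DecidableEq V]

/-!
After the `(2t+1)`-st arrival the graph is a bidirected path on `t + 2` vertices in which one end,
the root, has no entering arc, and the root alternates between the right and the left end. Such a
graph has a unique maximum arborescence forest, the path directed away from the root: in a maximum
forest the heads of the arcs are distinct and so are the undirected edges, which forces every arc
to point away from the root. Consecutive forced forests point in opposite directions, so the `t`-th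
pair of arrivals costs at least `t + 1`, in total at least `(n - 1)(n - 2) / 2 ≥ n² / 8`.
-/

open SimpleGraph

theorem SimpleGraph.pathGraph_isAcyclic (n : ℕ) : (pathGraph n).IsAcyclic := by
  rw [isAcyclic_iff_forall_adj_isBridge]
  intro u v huv
  rw [isBridge_iff, reachable_iff_reflTransGen]
  intro hreach
  rw [pathGraph_adj] at huv
  -- the only edge crossing the cut `{x | x ≤ min u v}` is `s(u, v)` itself
  have hcut : ∀ x y, ((pathGraph n).deleteEdges {s(u, v)}).Adj x y →
      (x.val ≤ min u.val v.val ↔ y.val ≤ min u.val v.val) := by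
    intro x y hxy
    rw [deleteEdges_adj, pathGraph_adj, Set.mem_singleton_iff, Sym2.eq_iff] at hxy
    obtain ⟨hxy, hne⟩ := hxy
    simp only [Fin.ext_iff] at hne
    omega
  have hsame : ∀ w, Relation.ReflTransGen ((pathGraph n).deleteEdges {s(u, v)}).Adj u w →
      (u.val ≤ min u.val v.val ↔ w.val ≤ min u.val v.val) := by
    intro w hw
    induction hw with
    | refl => rfl
    | tail _ hstep ih => exact ih.trans (hcut _ _ hstep)
  have := hsame v hreach
  omega

theorem undirAcyclic_of_isAcyclic {α : Type*} {G : SimpleGraph α} (hG : G.IsAcyclic)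
    {F : Finset (α × α)}
    (hadj : ∀ a ∈ F, G.Adj a.1 a.2) (hanti : ∀ a ∈ F, a.swap ∉ F) : UndirAcyclic F := by
  refine ⟨fun a ha => ⟨(hadj a ha).ne, hanti a ha⟩, hG.anti fun u v huv => ?_⟩
  rw [fromRel_adj] at huv
  rcases huv.2 with h | h
  · exact hadj _ h
  · exact (hadj _ h).symm

theorem inDeg_le_one_iff_s7 {α : Type*} [DecidableEq α] {F : Finset (α × α)} :
    (∀ v, inDeg F v ≤ 1) ↔ Set.InjOn Prod.snd (F : Set (α × α)) := by
  simp only [inDeg, Finset.card_le_one, Finset.mem_filter]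
  exact ⟨fun h a ha b hb hab => h b.2 a ⟨ha, hab⟩ b ⟨hb, rfl⟩,
    fun h v a ha b hb => h ha.1 hb.1 (ha.2.trans hb.2.symm)⟩

theorem Finset.eqOn_of_le_of_injOn_of_mapsTo {ι M : Type*} [AddCommMonoid M] [PartialOrder M]
    [IsOrderedCancelAddMonoid M] [DecidableEq M] {s : Finset ι} {t : Finset M} {f g : ι → M}
    (hle : ∀ i ∈ s, f i ≤ g i) (hf : Set.InjOn f s) (hg : Set.InjOn g s)
    (hfs : Set.MapsTo f s t) (hgs : Set.MapsTo g s t) (hcard : t.card ≤ s.card) :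
    ∀ i ∈ s, f i = g i := by
  have himage : ∀ h : ι → M, Set.InjOn h s → Set.MapsTo h s t → s.image h = t :=
    fun h hinj hmaps => eq_of_subset_of_card_le (image_subset_iff.2 hmaps)
      (by rwa [card_image_of_injOn hinj])
  refine (sum_eq_sum_iff_of_le hle).1 ?_
  calc ∑ i ∈ s, f i = ∑ x ∈ t, x := by rw [← himage f hf hfs, sum_image hf]
    _ = ∑ i ∈ s, g i := by rw [← himage g hg hgs, sum_image hg]

namespace BidirectedPath

variable {n l r : ℕ}

def biPath (n l r : ℕ) : Finset (Fin n × Fin n) :=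
  {a | (a.1.val + 1 = a.2.val ∨ a.2.val + 1 = a.1.val) ∧
    l ≤ a.1.val ∧ l ≤ a.2.val ∧ a.1.val ≤ r ∧ a.2.val ≤ r}

def leftPath (n l r : ℕ) : Finset (Fin n × Fin n) :=
  {a | a.2.val + 1 = a.1.val ∧ l ≤ a.2.val ∧ a.1.val ≤ r}

def rightPath (n l r : ℕ) : Finset (Fin n × Fin n) :=
  {a | a.1.val + 1 = a.2.val ∧ l ≤ a.1.val ∧ a.2.val ≤ r}

@[simp]
theorem mem_biPath {a : Fin n × Fin n} : a ∈ biPath n l r ↔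
    (a.1.val + 1 = a.2.val ∨ a.2.val + 1 = a.1.val) ∧
      l ≤ a.1.val ∧ l ≤ a.2.val ∧ a.1.val ≤ r ∧ a.2.val ≤ r := by
  simp [biPath]

@[simp]
theorem mem_leftPath {a : Fin n × Fin n} :
    a ∈ leftPath n l r ↔ a.2.val + 1 = a.1.val ∧ l ≤ a.2.val ∧ a.1.val ≤ r := by
  simp [leftPath]

@[simp]
theorem mem_rightPath {a : Fin n × Fin n} :
    a ∈ rightPath n l r ↔ a.1.val + 1 = a.2.val ∧ l ≤ a.1.val ∧ a.2.val ≤ r := by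
  simp [rightPath]

theorem disjoint_leftPath_rightPath {l' r' : ℕ} :
    Disjoint (leftPath n l r) (rightPath n l' r') := by
  rw [Finset.disjoint_left]
  intro a
  simp only [mem_leftPath, mem_rightPath]
  omega

theorem card_leftPath (hr : r < n) : (leftPath n l r).card = r - l := by
  rw [← Nat.card_Ico l r]
  refine card_bij (fun a _ => a.2.val) (fun a ha => ?_) (fun a ha b hb hab => ?_) fun j hj => ?_
  · rw [mem_leftPath] at ha
    rw [mem_Ico]
    omega
  · rw [mem_leftPath] at ha hb
    exact Prod.ext (Fin.ext (by omega)) (Fin.ext hab)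
  · rw [mem_Ico] at hj
    refine ⟨(⟨j + 1, by omega⟩, ⟨j, by omega⟩), ?_, rfl⟩
    simp only [mem_leftPath, true_and]
    omega

theorem rightPath_eq_image_swap : rightPath n l r = (leftPath n l r).image Prod.swap := by
  ext a
  simp only [mem_rightPath, mem_image, mem_leftPath, Prod.exists, Prod.swap_prod_mk]
  constructor
  · intro h
    exact ⟨a.2, a.1, h, rfl⟩
  · rintro ⟨u, v, h, rfl⟩
    exact h

theorem card_rightPath (hr : r < n) : (rightPath n l r).card = r - l := by
  rw [rightPath_eq_image_swap, card_image_of_injective _ Prod.swap_injective, card_leftPath hr]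

theorem isArbForest_leftPath : IsArbForest (leftPath n l r) := by
  refine ⟨inDeg_le_one_iff_s7.2 fun a ha b hb hab => ?_, undirAcyclic_of_isAcyclic
    (pathGraph_isAcyclic n) (fun a ha => ?_) fun a ha hswap => ?_⟩
  · simp only [mem_coe, mem_leftPath] at ha hb
    have := congrArg Fin.val hab
    exact Prod.ext (Fin.ext (by omega)) hab
  · rw [pathGraph_adj]
    rw [mem_leftPath] at ha
    omega
  · simp only [mem_leftPath, Prod.fst_swap, Prod.snd_swap] at ha hswap
    omega

theorem isArbForest_rightPath : IsArbForest (rightPath n l r) := by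
  refine ⟨inDeg_le_one_iff_s7.2 fun a ha b hb hab => ?_, undirAcyclic_of_isAcyclic
    (pathGraph_isAcyclic n) (fun a ha => ?_) fun a ha hswap => ?_⟩
  · simp only [mem_coe, mem_rightPath] at ha hb
    have := congrArg Fin.val hab
    exact Prod.ext (Fin.ext (by omega)) hab
  · rw [pathGraph_adj]
    rw [mem_rightPath] at ha
    omega
  · simp only [mem_rightPath, Prod.fst_swap, Prod.snd_swap] at ha hswap
    omega

theorem injOn_min_of_antisymm {F : Finset (Fin n × Fin n)} (hF : ∀ a ∈ F, a ∈ biPath n l r)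
    (hanti : ∀ a ∈ F, a.swap ∉ F) :
    Set.InjOn (fun a : Fin n × Fin n => min a.1.val a.2.val) (F : Set (Fin n × Fin n)) := by
  intro a ha b hb (hab : min a.1.val a.2.val = min b.1.val b.2.val)
  have hma := mem_biPath.1 (hF a ha)
  have hmb := mem_biPath.1 (hF b hb)
  by_cases h : a.1.val = b.1.val
  · exact Prod.ext (Fin.ext h) (Fin.ext (by omega))
  · have hswap : a = b.swap := Prod.ext (Fin.ext (by simp; omega)) (Fin.ext (by simp; omega))
    exact absurd (hswap ▸ ha) (hanti b hb)

theorem injOn_max_of_antisymm {F : Finset (Fin n × Fin n)} (hF : ∀ a ∈ F, a ∈ biPath n l r)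
    (hanti : ∀ a ∈ F, a.swap ∉ F) :
    Set.InjOn (fun a : Fin n × Fin n => max a.1.val a.2.val) (F : Set (Fin n × Fin n)) := by
  intro a ha b hb (hab : max a.1.val a.2.val = max b.1.val b.2.val)
  have hma := mem_biPath.1 (hF a ha)
  have hmb := mem_biPath.1 (hF b hb)
  by_cases h : a.1.val = b.1.val
  · exact Prod.ext (Fin.ext h) (Fin.ext (by omega))
  · have hswap : a = b.swap := Prod.ext (Fin.ext (by simp; omega)) (Fin.ext (by simp; omega))
    exact absurd (hswap ▸ ha) (hanti b hb)

theorem _root_.IsMaxArbForest.eq_leftPath (hr : r < n) {F : Finset (Fin n × Fin n)}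
    (hmax : IsMaxArbForest {a ∈ biPath n l r | a.2.val ≠ r} F) : F = leftPath n l r := by
  obtain ⟨hsub, ⟨hdeg, hacyc⟩, hbest⟩ := hmax
  have hF : ∀ a ∈ F, a ∈ biPath n l r ∧ a.2.val ≠ r := fun a ha => mem_filter.1 (hsub ha)
  have hcard : r - l ≤ F.card := by
    refine card_leftPath (l := l) hr ▸ hbest _ (fun a ha => ?_) isArbForest_leftPath
    simp only [mem_leftPath] at ha
    simp only [mem_filter, mem_biPath]
    omega
  -- heads and lower endpoints of the arcs of `F` both enumerate `[l, r)`, so they coincide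
  have hleft : ∀ a ∈ F, min a.1.val a.2.val = a.2.val := by
    refine Finset.eqOn_of_le_of_injOn_of_mapsTo (t := Ico l r) (fun a _ => min_le_right _ _)
      (injOn_min_of_antisymm (fun a ha => (hF a ha).1) fun a ha => (hacyc.1 a ha).2)
      (Fin.val_injective.comp_injOn (inDeg_le_one_iff_s7.1 hdeg))
      (fun a ha => ?_) (fun a ha => ?_) (by rwa [Nat.card_Ico])
    all_goals
      obtain ⟨hab, hne⟩ := hF a ha
      rw [mem_biPath] at hab
      simp only [coe_Ico, Set.mem_Ico]
      omega
  refine eq_of_subset_of_card_le (fun a ha => ?_) (by rwa [card_leftPath hr])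
  obtain ⟨hab, -⟩ := hF a ha
  have := hleft a ha
  rw [mem_biPath] at hab
  rw [mem_leftPath]
  omega

theorem _root_.IsMaxArbForest.eq_rightPath (hr : r < n) {F : Finset (Fin n × Fin n)}
    (hmax : IsMaxArbForest {a ∈ biPath n l r | a.2.val ≠ l} F) : F = rightPath n l r := by
  obtain ⟨hsub, ⟨hdeg, hacyc⟩, hbest⟩ := hmax
  have hF : ∀ a ∈ F, a ∈ biPath n l r ∧ a.2.val ≠ l := fun a ha => mem_filter.1 (hsub ha)
  have hcard : r - l ≤ F.card := by
    refine card_rightPath (l := l) hr ▸ hbest _ (fun a ha => ?_) isArbForest_rightPath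
    simp only [mem_rightPath] at ha
    simp only [mem_filter, mem_biPath]
    omega
  -- heads and upper endpoints of the arcs of `F` both enumerate `(l, r]`, so they coincide
  have hright : ∀ a ∈ F, a.2.val = max a.1.val a.2.val := by
    refine Finset.eqOn_of_le_of_injOn_of_mapsTo (t := Ioc l r) (fun a _ => le_max_right _ _)
      (Fin.val_injective.comp_injOn (inDeg_le_one_iff_s7.1 hdeg))
      (injOn_max_of_antisymm (fun a ha => (hF a ha).1) fun a ha => (hacyc.1 a ha).2)
      (fun a ha => ?_) (fun a ha => ?_) (by rwa [Nat.card_Ioc])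
    all_goals
      obtain ⟨hab, hne⟩ := hF a ha
      rw [mem_biPath] at hab
      simp only [coe_Ioc, Set.mem_Ioc]
      omega
  refine eq_of_subset_of_card_le (fun a ha => ?_) (by rwa [card_rightPath hr])
  obtain ⟨hab, -⟩ := hF a ha
  have := hright a ha
  rw [mem_biPath] at hab
  rw [mem_rightPath]
  omega

def leftEnd (n t : ℕ) : ℕ := n / 2 - (t + 1) / 2

def rightEnd (n t : ℕ) : ℕ := n / 2 + t / 2

def root (n t : ℕ) : ℕ := if Even t then rightEnd n t else leftEnd n t

def stepGraph (n t : ℕ) : Finset (Fin n × Fin n) :=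
  {a ∈ biPath n (leftEnd n t) (rightEnd n t) | a.2.val ≠ root n t}

def stepForest (n t : ℕ) : Finset (Fin n × Fin n) :=
  if Even t then leftPath n (leftEnd n t) (rightEnd n t)
  else rightPath n (leftEnd n t) (rightEnd n t)

theorem leftEnd_two_mul (s : ℕ) : leftEnd n (2 * s) = n / 2 - s := by
  simp only [leftEnd]; omega

theorem rightEnd_two_mul (s : ℕ) : rightEnd n (2 * s) = n / 2 + s := by
  simp only [rightEnd]; omega

theorem leftEnd_two_mul_add_one (s : ℕ) : leftEnd n (2 * s + 1) = n / 2 - (s + 1) := by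
  simp only [leftEnd]; omega

theorem rightEnd_two_mul_add_one (s : ℕ) : rightEnd n (2 * s + 1) = n / 2 + s := by
  simp only [rightEnd]; omega

theorem stepGraph_zero : stepGraph n 0 = ∅ := by
  ext a
  simp only [stepGraph, leftEnd, rightEnd, mem_filter, mem_biPath, notMem_empty, iff_false]
  omega

theorem card_stepForest {t : ℕ} (ht : t + 1 ≤ n) : (stepForest n t).card = t := by
  have hr : rightEnd n t < n := by simp only [rightEnd]; omega
  have hlen : rightEnd n t - leftEnd n t = t := by simp only [rightEnd, leftEnd]; omega
  unfold stepForest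
  split_ifs
  · rw [card_leftPath hr, hlen]
  · rw [card_rightPath hr, hlen]

theorem disjoint_stepForest_succ (t : ℕ) : Disjoint (stepForest n t) (stepForest n (t + 1)) := by
  unfold stepForest
  rcases Nat.even_or_odd t with h | h
  · rw [if_pos h, if_neg (Nat.not_even_iff_odd.2 h.add_one)]
    exact disjoint_leftPath_rightPath
  · rw [if_neg (Nat.not_even_iff_odd.2 h), if_pos h.add_one]
    exact disjoint_leftPath_rightPath.symm

theorem _root_.IsMaxArbForest.eq_stepForest {t : ℕ} (ht : t + 1 ≤ n)
    {F : Finset (Fin n × Fin n)} (hF : IsMaxArbForest (stepGraph n t) F) : F = stepForest n t := by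
  have hr : rightEnd n t < n := by simp only [rightEnd]; omega
  unfold stepGraph root at hF
  unfold stepForest
  split_ifs at hF ⊢
  · exact hF.eq_leftPath hr
  · exact hF.eq_rightPath hr

variable [NeZero n]

def closingArc (n t : ℕ) [NeZero n] : Fin n × Fin n :=
  if Even t then (Fin.ofNat n (rightEnd n t - 1), Fin.ofNat n (rightEnd n t))
  else (Fin.ofNat n (leftEnd n t + 1), Fin.ofNat n (leftEnd n t))

def extensionArc (n t : ℕ) [NeZero n] : Fin n × Fin n :=
  if Even t then (Fin.ofNat n (leftEnd n t - 1), Fin.ofNat n (leftEnd n t))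
  else (Fin.ofNat n (rightEnd n t + 1), Fin.ofNat n (rightEnd n t))

def arrival (n : ℕ) [NeZero n] (i : ℕ) : Fin n × Fin n :=
  if Even i then closingArc n (i / 2) else extensionArc n (i / 2)

theorem prod_eq_ofNat_iff {a : Fin n × Fin n} {x y : ℕ} (hx : x < n) (hy : y < n) :
    a = (Fin.ofNat n x, Fin.ofNat n y) ↔ a.1.val = x ∧ a.2.val = y := by
  simp [Prod.ext_iff, Fin.ext_iff, Nat.mod_eq_of_lt hx, Nat.mod_eq_of_lt hy]

theorem stepGraph_succ {t : ℕ} (ht : t + 2 ≤ n) :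
    stepGraph n (t + 1) = insert (extensionArc n t) (insert (closingArc n t) (stepGraph n t)) := by
  ext a
  obtain ⟨s, rfl | rfl⟩ := Nat.even_or_odd' t
  on_goal 2 => rw [show 2 * s + 1 + 1 = 2 * (s + 1) by ring]
  all_goals
    simp only [stepGraph, closingArc, extensionArc, root, even_two_mul,
      Nat.not_even_two_mul_add_one, if_true, if_false, leftEnd_two_mul, rightEnd_two_mul,
      leftEnd_two_mul_add_one, rightEnd_two_mul_add_one, mem_insert, mem_filter, mem_biPath]
    rw [prod_eq_ofNat_iff (by omega) (by omega), prod_eq_ofNat_iff (by omega) (by omega)]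
    omega

theorem closingArc_zero : closingArc n 0 = extensionArc n 0 := by
  simp [closingArc, extensionArc, leftEnd, rightEnd]

theorem image_arrival {t : ℕ} (ht : t + 2 ≤ n) :
    (Icc 1 (2 * t + 1)).image (arrival n) = stepGraph n (t + 1) := by
  induction t with
  | zero =>
    rw [stepGraph_succ ht, stepGraph_zero, closingArc_zero]
    simp [arrival]
  | succ t ih =>
    have hIcc : Icc 1 (2 * (t + 1) + 1) =
        insert (2 * t + 3) (insert (2 * t + 2) (Icc 1 (2 * t + 1))) := by
      ext i
      simp only [mem_Icc, mem_insert]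
      omega
    have hodd : arrival n (2 * t + 3) = extensionArc n (t + 1) := by
      rw [arrival, if_neg (Nat.not_even_iff_odd.2 ⟨t + 1, by ring⟩),
        show (2 * t + 3) / 2 = t + 1 by omega]
    have heven : arrival n (2 * t + 2) = closingArc n (t + 1) := by
      rw [arrival, if_pos ⟨t + 1, by ring⟩, show (2 * t + 2) / 2 = t + 1 by omega]
    rw [hIcc, image_insert, image_insert, ih (by omega), hodd, heven, stepGraph_succ ht]

end BidirectedPath

open BidirectedPath

theorem sum_card_sdiff_two_step_le {α : Type*} [DecidableEq α] (F : ℕ → Finset α) (k : ℕ) :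
    ∑ t ∈ range k, (F (2 * t + 1) \ F (2 * t + 3)).card ≤
      ∑ i ∈ Ico 1 (2 * k + 1), (F i \ F (i + 1)).card := by
  induction k with
  | zero => simp
  | succ k ih =>
    have htri : (F (2 * k + 1) \ F (2 * k + 3)).card ≤
        (F (2 * k + 1) \ F (2 * k + 2)).card + (F (2 * k + 2) \ F (2 * k + 3)).card :=
      (card_le_card (sdiff_triangle _ _ _)).trans (card_union_le _ _)
    rw [sum_range_succ, show 2 * (k + 1) + 1 = 2 * k + 1 + 1 + 1 by ring,
      sum_Ico_succ_top (by omega), sum_Ico_succ_top (by omega),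
      show 2 * k + 1 + 1 = 2 * k + 2 by ring, show 2 * k + 2 + 1 = 2 * k + 3 by ring]
    omega

theorem sq_le_eight_mul_sum_range_succ {n : ℕ} (hn : 4 ≤ n) :
    n ^ 2 ≤ 8 * ∑ t ∈ range (n - 2), (t + 1) := by
  have hgauss := sum_range_id_mul_two (n - 2 + 1)
  rw [sum_range_succ'] at hgauss
  obtain ⟨k, rfl⟩ : ∃ k, n = k + 4 := ⟨n - 4, by omega⟩
  simp only [show k + 4 - 2 = k + 2 by omega, add_zero, Nat.add_sub_cancel] at hgauss ⊢
  nlinarith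

/-- Lower bound for adversarial arc arrivals: for every even `n ≥ 4` there is a
fixed sequence of `O(n)` arc insertions on an `n`-vertex digraph such that any
maintained sequence of maximum arborescence forests incurs recourse `Ω(n²)`. -/
theorem stmt7 : ∃ C c : ℝ, 0 < C ∧ 0 < c ∧ ∀ n : ℕ, 4 ≤ n → Even n →
    ∃ m : ℕ, (m : ℝ) ≤ C * n ∧
      ∃ a : ℕ → Fin n × Fin n,
        ∀ F : ℕ → Finset (Fin n × Fin n),
          (∀ i, 1 ≤ i → i ≤ m → IsMaxArbForest ((Finset.Icc 1 i).image a) (F i)) →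
          c * (n : ℝ) ^ 2 ≤ ∑ i ∈ Finset.Ico 1 m, ((F i \ F (i + 1)).card : ℝ) := by
  refine ⟨2, 1 / 8, by norm_num, by norm_num, fun n hn _ => ?_⟩
  have : NeZero n := ⟨by omega⟩
  refine ⟨2 * (n - 2) + 1, by exact_mod_cast (by omega : 2 * (n - 2) + 1 ≤ 2 * n),
    arrival n, fun F hF => ?_⟩
  have hforced : ∀ t, t + 2 ≤ n → F (2 * t + 1) = stepForest n (t + 1) := fun t ht =>
    (image_arrival ht ▸ hF _ (by omega) (by omega)).eq_stepForest (by omega)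
  have hround : ∀ t ∈ range (n - 2), (F (2 * t + 1) \ F (2 * t + 3)).card = t + 1 := by
    intro t ht
    rw [mem_range] at ht
    rw [hforced t (by omega), show 2 * t + 3 = 2 * (t + 1) + 1 by ring,
      hforced (t + 1) (by omega), sdiff_eq_self_of_disjoint (disjoint_stepForest_succ _),
      card_stepForest (by omega)]
  have hrecourse := sum_card_sdiff_two_step_le F (n - 2)
  rw [sum_congr rfl hround] at hrecourse
  have hnat : n ^ 2 ≤ 8 * ∑ i ∈ Ico 1 (2 * (n - 2) + 1), (F i \ F (i + 1)).card :=
    (sq_le_eight_mul_sum_range_succ hn).trans (by omega)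
  have hreal := (Nat.cast_le (α := ℝ)).2 hnat
  push_cast at hreal
  linarith
end

section
/- Let c > 1 and p = c/n, and let β = 1 − 1.1/c − (ln c)/c. In the random digraph D(n, p), the expected number of out-arborescences T rooted at some vertex with |T| = s vertices and with no arcs of D(n,p) leaving V(T) is at most (n/(sc)) · (e^{1 − c + cs/n + ln c})^s; in particular, for 10 log n ≤ s ≤ βn this expectation is at most 1/poly(n). -/
open MeasureTheory

/-- Bernoulli measure on `Bool` with success probability `p` (truncated at 1). -/
noncomputable def bern (p : ℝ) : Measure Bool :=
  (PMF.bernoulli (min (Real.toNNReal p) 1) (min_le_right _ _)).toMeasure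

/-- The random digraph `D(n, p)`: every possible arc is present independently
with probability `p`; an outcome `ω` records for each ordered pair whether the
corresponding arc is present (diagonal entries are ignored). -/
noncomputable def Dnp (n : ℕ) (p : ℝ) : Measure ((Fin n × Fin n) → Bool) :=
  Measure.pi fun _ => bern p

/-- The arc `(x, y)` is present in the outcome `ω`. -/
def arcOf {n : ℕ} (ω : (Fin n × Fin n) → Bool) (x y : Fin n) : Prop :=
  x ≠ y ∧ ω (x, y) = true

/-- Directed reachability in the digraph given by `ω`. -/
def reachOf {n : ℕ} (ω : (Fin n × Fin n) → Bool) : Fin n → Fin n → Prop :=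
  Relation.ReflTransGen (arcOf ω)

/-- The out-component of `v`: all vertices reachable from `v`. -/
def outComp {n : ℕ} (ω : (Fin n × Fin n) → Bool) (v : Fin n) : Set (Fin n) :=
  {w | reachOf ω v w}

/-- The in-component of `v`: all vertices that can reach `v`. -/
def inComp {n : ℕ} (ω : (Fin n × Fin n) → Bool) (v : Fin n) : Set (Fin n) :=
  {w | reachOf ω w v}

open Finset

variable {V : Type*} [Fintype V] [DecidableEq V]

/-- The vertex set of a finite arc set. -/
def verts {n : ℕ} (T : Finset (Fin n × Fin n)) : Finset (Fin n) :=
  T.image Prod.fst ∪ T.image Prod.snd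

/-- `T` is an out-arborescence on `s` vertices present in the digraph `ω`, with
no arcs of the digraph leaving its vertex set: all arcs of `T` are present,
`T` is an arborescence on `s` vertices (an arborescence forest, spanning, with
all vertices reachable from a root), and no present arc leaves `verts T`. -/
def IsClosedOutArb {n : ℕ} (ω : (Fin n × Fin n) → Bool) (s : ℕ)
    (T : Finset (Fin n × Fin n)) : Prop :=
  (∀ a ∈ T, arcOf ω a.1 a.2) ∧ IsArbForest T ∧
  (verts T).card = s ∧ T.card = s - 1 ∧
  (∃ r ∈ verts T, ∀ w ∈ verts T, Reach T r w) ∧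
  (∀ x y : Fin n, arcOf ω x y → x ∈ verts T → y ∈ verts T)


/-!
By linearity of expectation the bound is a count. For a fixed out-arborescence `T` on `s`
vertices, "`T` is present and no arc leaves `V(T)`" fixes `s - 1 + s(n - s)` independent
coordinates, so it has probability `p^(s-1) (1-p)^(s(n-s))`. There are at most
`C(n, s) s^(s-1)` such `T`: each is determined by its vertex set and the Prüfer code of its
parent map, a word of length `s - 1` over `V(T)` whose last letter is the root. The estimate
then follows from `C(n, s) ≤ n^s / s!`, `s^s / s! ≤ e^s` and `1 - p ≤ e^(-p)`.
-/

section PruferCode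

variable {U : Type*} [LinearOrder U] {X : Finset U} {r ℓ : U} {f g : U → U}

/-- `f` is the parent map of a tree on `insert r X` rooted at `r`, extended by `r` off `X`. -/
def IsParentMap (X : Finset U) (r : U) (f : U → U) : Prop :=
  (∀ v ∉ X, f v = r) ∧ (∀ v ∈ X, f v ∈ insert r X) ∧ ∀ v ∈ X, ∃ k, f^[k] v = r

/-- The smallest leaf of `X` under `f`; the fallback `X.min'` never occurs for parent maps. -/
noncomputable def pruneLeaf (f : U → U) (X : Finset U) (hX : X.Nonempty) : U :=
  if hL : (X \ X.image f).Nonempty then (X \ X.image f).min' hL else X.min' hX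

lemma pruneLeaf_mem (f : U → U) (hX : X.Nonempty) : pruneLeaf f X hX ∈ X := by
  unfold pruneLeaf
  split_ifs with hL
  · exact (mem_sdiff.mp (min'_mem _ hL)).1
  · exact min'_mem _ hX

lemma pruneLeaf_congr (hX : X.Nonempty) (h : X.image f = X.image g) :
    pruneLeaf f X hX = pruneLeaf g X hX := by
  unfold pruneLeaf
  rw [h]

/-- The Prüfer code: repeatedly delete the smallest leaf and record its parent. -/
noncomputable def pruneCode (f : U → U) (X : Finset U) : List U :=
  if hX : X.Nonempty then f (pruneLeaf f X hX) :: pruneCode f (X.erase (pruneLeaf f X hX))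
  else []
termination_by #X
decreasing_by exact card_erase_lt_of_mem (pruneLeaf_mem f hX)

lemma pruneCode_of_nonempty (f : U → U) (hX : X.Nonempty) :
    pruneCode f X = f (pruneLeaf f X hX) :: pruneCode f (X.erase (pruneLeaf f X hX)) := by
  rw [pruneCode, dif_pos hX]

@[simp]
lemma pruneCode_empty (f : U → U) : pruneCode f ∅ = [] := by
  rw [pruneCode, dif_neg Finset.not_nonempty_empty]

lemma pruneCode_length (f : U → U) (X : Finset U) : (pruneCode f X).length = #X := by
  induction X using Finset.strongInduction with
  | _ X ih =>
    obtain rfl | hX := X.eq_empty_or_nonempty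
    · simp
    · have hℓ := pruneLeaf_mem f hX
      rw [pruneCode_of_nonempty f hX, List.length_cons, ih _ (erase_ssubset hℓ),
        card_erase_add_one hℓ]

lemma pruneCode_toFinset (f : U → U) (X : Finset U) :
    (pruneCode f X).toFinset = X.image f := by
  induction X using Finset.strongInduction with
  | _ X ih =>
    obtain rfl | hX := X.eq_empty_or_nonempty
    · simp
    · have hℓ := pruneLeaf_mem f hX
      rw [pruneCode_of_nonempty f hX, List.toFinset_cons, ih _ (erase_ssubset hℓ),
        ← image_insert, insert_erase hℓ]

lemma pruneCode_congr (hfg : ∀ v ∈ X, f v = g v) : pruneCode f X = pruneCode g X := by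
  induction X using Finset.strongInduction with
  | _ X ih =>
    obtain rfl | hX := X.eq_empty_or_nonempty
    · simp
    · have hℓ := pruneLeaf_mem f hX
      rw [pruneCode_of_nonempty f hX, pruneCode_of_nonempty g hX,
        ← pruneLeaf_congr hX (image_congr hfg), hfg _ hℓ,
        ih _ (erase_ssubset hℓ) fun v hv => hfg v (mem_of_mem_erase hv)]

/-- After the first step the code only sees `X.erase ℓ`, so the parent of `ℓ` may be reset. -/
lemma pruneCode_eq_cons_update (f : U → U) (hX : X.Nonempty) (a : U) :
    pruneCode f X = f (pruneLeaf f X hX) ::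
      pruneCode (Function.update f (pruneLeaf f X hX) a) (X.erase (pruneLeaf f X hX)) := by
  rw [pruneCode_of_nonempty f hX]
  congr 1
  exact pruneCode_congr fun v hv => (Function.update_of_ne (ne_of_mem_erase hv) _ _).symm

namespace IsParentMap

lemma mem_pruneCode (hf : IsParentMap X r f) {x : U} (hx : x ∈ pruneCode f X) :
    x ∈ insert r X := by
  rw [← List.mem_toFinset, pruneCode_toFinset] at hx
  obtain ⟨v, hv, rfl⟩ := mem_image.mp hx
  exact hf.2.1 v hv

lemma exists_leaf (hf : IsParentMap X r f) (hr : r ∉ X) (hX : X.Nonempty) :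
    (X \ X.image f).Nonempty := by
  by_contra hL
  rw [not_nonempty_iff_eq_empty, sdiff_eq_empty_iff_subset] at hL
  obtain ⟨v, hv⟩ := hX
  obtain ⟨k, hk⟩ := hf.2.2 v hv
  have hstay : ∀ i, f^[i] v ∈ X := by
    intro i
    induction i with
    | zero => exact hv
    | succ i ih =>
      rw [Function.iterate_succ_apply', eq_of_subset_of_card_le hL card_image_le]
      exact mem_image_of_mem f ih
  exact hr (hk ▸ hstay k)

lemma pruneLeaf_notMem_image (hf : IsParentMap X r f) (hr : r ∉ X) (hX : X.Nonempty) :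
    pruneLeaf f X hX ∉ X.image f := by
  have hL := hf.exists_leaf hr hX
  unfold pruneLeaf
  rw [dif_pos hL]
  exact (mem_sdiff.mp (min'_mem _ hL)).2

lemma iterate_ne_leaf (hf : IsParentMap X r f) (hr : r ∉ X) (hℓX : ℓ ∈ X)
    (hℓ : ℓ ∉ X.image f) {v : U} (hvℓ : v ≠ ℓ) (i : ℕ) : f^[i] v ≠ ℓ := by
  cases i with
  | zero => exact hvℓ
  | succ i =>
    rw [Function.iterate_succ_apply']
    by_cases hi : f^[i] v ∈ X
    · exact fun h => hℓ (h ▸ mem_image_of_mem f hi)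
    · rw [hf.1 _ hi]
      exact fun h => hr (h ▸ hℓX)

lemma erase_leaf (hf : IsParentMap X r f) (hr : r ∉ X) (hℓX : ℓ ∈ X)
    (hℓ : ℓ ∉ X.image f) : IsParentMap (X.erase ℓ) r (Function.update f ℓ r) := by
  refine ⟨fun v hv => ?_, fun v hv => ?_, fun v hv => ?_⟩
  · by_cases hvℓ : v = ℓ
    · rw [hvℓ, Function.update_self]
    · rw [Function.update_of_ne hvℓ]
      exact hf.1 v fun hvX => hv (mem_erase.mpr ⟨hvℓ, hvX⟩)
  · obtain ⟨hvℓ, hvX⟩ := mem_erase.mp hv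
    have hfv : f v ≠ ℓ := fun h => hℓ (h ▸ mem_image_of_mem f hvX)
    rw [Function.update_of_ne hvℓ]
    simpa [hfv] using hf.2.1 v hvX
  · obtain ⟨hvℓ, hvX⟩ := mem_erase.mp hv
    obtain ⟨k, hk⟩ := hf.2.2 v hvX
    have hiter : ∀ i, (Function.update f ℓ r)^[i] v = f^[i] v := by
      intro i
      induction i with
      | zero => rfl
      | succ i ih =>
        rw [Function.iterate_succ_apply', Function.iterate_succ_apply', ih,
          Function.update_of_ne (hf.iterate_ne_leaf hr hℓX hℓ hvℓ i)]
    exact ⟨k, (hiter k).trans hk⟩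

lemma pruneCode_getLast? (hf : IsParentMap X r f) (hr : r ∉ X) (hX : X.Nonempty) :
    (pruneCode f X).getLast? = some r := by
  induction X using Finset.strongInduction generalizing f with
  | _ X ih =>
    have hℓX := pruneLeaf_mem f hX
    have hℓ := hf.pruneLeaf_notMem_image hr hX
    rw [pruneCode_eq_cons_update f hX r]
    generalize pruneLeaf f X hX = ℓ at hℓX hℓ ⊢
    obtain hrest | hrest := (X.erase ℓ).eq_empty_or_nonempty
    · have hfℓ : f ℓ ≠ ℓ := fun h => hℓ (h ▸ mem_image_of_mem f hℓX)
      rw [hrest, pruneCode_empty, List.getLast?_singleton, Option.some_inj]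
      refine (mem_insert.mp (hf.2.1 ℓ hℓX)).resolve_right fun h => ?_
      simpa [hrest] using mem_erase.mpr ⟨hfℓ, h⟩
    · rw [List.getLast?_cons, ih _ (erase_ssubset hℓX) (hf.erase_leaf hr hℓX hℓ)
        (fun h => hr (mem_of_mem_erase h)) hrest]
      rfl

lemma pruneCode_injective (hf : IsParentMap X r f) (hg : IsParentMap X r g) (hr : r ∉ X)
    (hcode : pruneCode f X = pruneCode g X) : f = g := by
  induction X using Finset.strongInduction generalizing f g with
  | _ X ih =>
    obtain rfl | hX := X.eq_empty_or_nonempty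
    · exact funext fun v => (hf.1 v (notMem_empty v)).trans (hg.1 v (notMem_empty v)).symm
    have himage : X.image f = X.image g := by
      rw [← pruneCode_toFinset f X, ← pruneCode_toFinset g X, hcode]
    have hℓX := pruneLeaf_mem f hX
    have hℓ := hf.pruneLeaf_notMem_image hr hX
    rw [pruneCode_eq_cons_update f hX r, pruneCode_eq_cons_update g hX r,
      ← pruneLeaf_congr hX himage, List.cons.injEq] at hcode
    set ℓ := pruneLeaf f X hX
    have hupdate := ih _ (erase_ssubset hℓX) (hf.erase_leaf hr hℓX hℓ)
      (hg.erase_leaf hr hℓX (himage ▸ hℓ)) (fun h => hr (mem_of_mem_erase h)) hcode.2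
    calc f = Function.update (Function.update f ℓ r) ℓ (f ℓ) := by
          rw [Function.update_idem, Function.update_eq_self]
      _ = Function.update (Function.update g ℓ r) ℓ (g ℓ) := by rw [hupdate, hcode.1]
      _ = g := by rw [Function.update_idem, Function.update_eq_self]

end IsParentMap

end PruferCode

section OutArborescence

variable {n s : ℕ} {T T' : Finset (Fin n × Fin n)} {r u v w : Fin n}

/-- The arc-set part of `IsClosedOutArb`, which does not involve the random digraph. -/
def IsOutArb (s : ℕ) (T : Finset (Fin n × Fin n)) : Prop :=
  IsArbForest T ∧ #(verts T) = s ∧ #T = s - 1 ∧ ∃ r ∈ verts T, ∀ w ∈ verts T, Reach T r w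

def IsReachRoot (T : Finset (Fin n × Fin n)) (r : Fin n) : Prop :=
  r ∈ verts T ∧ ∀ w ∈ verts T, Reach T r w

lemma fst_mem_verts {a : Fin n × Fin n} (ha : a ∈ T) : a.1 ∈ verts T :=
  mem_union_left _ (mem_image_of_mem _ ha)

lemma snd_mem_verts {a : Fin n × Fin n} (ha : a ∈ T) : a.2 ∈ verts T :=
  mem_union_right _ (mem_image_of_mem _ ha)

lemma sum_inDeg_verts : ∑ v ∈ verts T, inDeg T v = #T :=
  (card_eq_sum_card_fiberwise fun _ ha => snd_mem_verts ha).symm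

lemma inDeg_eq_zero_iff : inDeg T v = 0 ↔ ∀ u, (u, v) ∉ T := by
  rw [inDeg, card_eq_zero, filter_eq_empty_iff]
  exact ⟨fun h u hu => h hu rfl, fun h ⟨u, w⟩ huw hwv => h u (hwv ▸ huw)⟩

lemma Reach.exists_arc_into (h : Reach T r w) (hw : w ≠ r) : ∃ u, (u, w) ∈ T := by
  obtain h | ⟨u, -, hu⟩ := Relation.ReflTransGen.cases_tail h
  · exact absurd h hw
  · exact ⟨u, hu⟩

lemma eq_of_inDeg_le_one (h : inDeg T v ≤ 1) (hu : (u, v) ∈ T) (hu' : (w, v) ∈ T) : u = w :=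
  congrArg Prod.fst <| card_le_one.mp h _ (mem_filter.mpr ⟨hu, rfl⟩) _ (mem_filter.mpr ⟨hu', rfl⟩)

namespace IsOutArb

lemma two_le (hT : IsOutArb s T) : 2 ≤ s := by
  obtain ⟨-, -, hcard, r, hr, -⟩ := hT
  have hne : T.Nonempty := by
    by_contra h
    simp [not_nonempty_iff_eq_empty.mp h, verts] at hr
  have := hne.card_pos
  omega

lemma inDeg_eq_one (hT : IsOutArb s T) (hr : IsReachRoot T r) (hw : w ∈ verts T)
    (hwr : w ≠ r) : inDeg T w = 1 := by
  obtain ⟨u, hu⟩ := (hr.2 w hw).exists_arc_into hwr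
  have : 0 < inDeg T w := card_pos.mpr ⟨_, mem_filter.mpr ⟨hu, rfl⟩⟩
  have := hT.1.1 w
  omega

/-- The `s - 1` arcs enter the `s - 1` non-root vertices, none is left for the root. -/
lemma inDeg_root (hT : IsOutArb s T) (hr : IsReachRoot T r) : inDeg T r = 0 := by
  have hsum := sum_inDeg_verts (T := T)
  rw [← add_sum_erase _ _ hr.1, sum_congr rfl fun w hw =>
    hT.inDeg_eq_one hr (mem_of_mem_erase hw) (ne_of_mem_erase hw), sum_const, smul_eq_mul,
    mul_one, card_erase_of_mem hr.1, hT.2.1, hT.2.2.1] at hsum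
  omega

end IsOutArb

/-- The unique vertex of in-degree `0` (with a default `d` for the empty arc set). -/
noncomputable def arbRoot (T : Finset (Fin n × Fin n)) (d : Fin n) : Fin n :=
  ((verts T).filter (inDeg T · = 0)).min.untopD d

noncomputable def arbParent (T : Finset (Fin n × Fin n)) (r v : Fin n) : Fin n :=
  if h : ∃ u, (u, v) ∈ T then h.choose else r

lemma arbParent_eq (h : inDeg T v ≤ 1) (hu : (u, v) ∈ T) : arbParent T r v = u := by
  have hex : ∃ u, (u, v) ∈ T := ⟨u, hu⟩
  rw [arbParent, dif_pos hex]
  exact eq_of_inDeg_le_one h hex.choose_spec hu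

lemma arbParent_of_inDeg_eq_zero (h : inDeg T v = 0) : arbParent T r v = r := by
  rw [arbParent, dif_neg]
  simpa using inDeg_eq_zero_iff.mp h

namespace IsOutArb

lemma arbRoot_eq (hT : IsOutArb s T) (hr : IsReachRoot T r) (d : Fin n) : arbRoot T d = r := by
  have hroots : (verts T).filter (inDeg T · = 0) = {r} := by
    refine eq_singleton_iff_unique_mem.mpr ⟨mem_filter.mpr ⟨hr.1, hT.inDeg_root hr⟩, ?_⟩
    intro w hw
    obtain ⟨hw, h0⟩ := mem_filter.mp hw
    by_contra hwr
    simp [hT.inDeg_eq_one hr hw hwr] at h0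
  rw [arbRoot, hroots, min_singleton]
  rfl

lemma isReachRoot_arbRoot (hT : IsOutArb s T) (d : Fin n) : IsReachRoot T (arbRoot T d) := by
  obtain ⟨r, hr⟩ := hT.2.2.2
  rwa [hT.arbRoot_eq hr]

lemma isParentMap_arbParent (hT : IsOutArb s T) (hr : IsReachRoot T r) :
    IsParentMap ((verts T).erase r) r (arbParent T r) := by
  refine ⟨fun v hv => arbParent_of_inDeg_eq_zero ?_, fun v hv => ?_, fun v hv => ?_⟩
  · by_cases hvr : v = r
    · exact hvr ▸ hT.inDeg_root hr
    · exact inDeg_eq_zero_iff.mpr fun u hu => hv (mem_erase.mpr ⟨hvr, snd_mem_verts hu⟩)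
  · obtain ⟨hvr, hvT⟩ := mem_erase.mp hv
    obtain ⟨u, hu⟩ := (hr.2 v hvT).exists_arc_into hvr
    rw [arbParent_eq (hT.1.1 v) hu, insert_erase hr.1]
    exact fst_mem_verts hu
  · have hreach := hr.2 v (mem_of_mem_erase hv)
    clear hv
    induction hreach with
    | refl => exact ⟨0, rfl⟩
    | tail _ hstep ih =>
      obtain ⟨k, hk⟩ := ih
      exact ⟨k + 1, by rw [Function.iterate_succ_apply, arbParent_eq (hT.1.1 _) hstep, hk]⟩

lemma eq_image_arbParent (hT : IsOutArb s T) (hr : IsReachRoot T r) :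
    T = ((verts T).erase r).image fun v => (arbParent T r v, v) := by
  ext ⟨u, v⟩
  simp only [mem_image, mem_erase, Prod.mk.injEq]
  constructor
  · intro huv
    have hvr : v ≠ r := fun h => inDeg_eq_zero_iff.mp (hT.inDeg_root hr) u (h ▸ huv)
    exact ⟨v, ⟨hvr, snd_mem_verts huv⟩, arbParent_eq (hT.1.1 v) huv, rfl⟩
  · rintro ⟨v, ⟨hvr, hv⟩, rfl, rfl⟩
    obtain ⟨u, hu⟩ := (hr.2 v hv).exists_arc_into hvr
    rwa [arbParent_eq (hT.1.1 v) hu]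

end IsOutArb

noncomputable def arbCode (T : Finset (Fin n × Fin n)) (d : Fin n) : List (Fin n) :=
  pruneCode (arbParent T (arbRoot T d)) ((verts T).erase (arbRoot T d))

namespace IsOutArb

lemma length_arbCode (hT : IsOutArb s T) (d : Fin n) : (arbCode T d).length = s - 1 := by
  rw [arbCode, pruneCode_length, card_erase_of_mem (hT.isReachRoot_arbRoot d).1, hT.2.1]

lemma mem_verts_of_mem_arbCode (hT : IsOutArb s T) {d x : Fin n} (hx : x ∈ arbCode T d) :
    x ∈ verts T := by
  have hr := hT.isReachRoot_arbRoot d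
  simpa [insert_erase hr.1] using (hT.isParentMap_arbParent hr).mem_pruneCode hx

lemma getLast?_arbCode (hT : IsOutArb s T) (d : Fin n) :
    (arbCode T d).getLast? = some (arbRoot T d) := by
  have hr := hT.isReachRoot_arbRoot d
  refine (hT.isParentMap_arbParent hr).pruneCode_getLast? (notMem_erase _ _) ?_
  rw [← card_pos, card_erase_of_mem hr.1, hT.2.1]
  have := hT.two_le
  omega

lemma eq_of_arbCode_eq (hT : IsOutArb s T) (hT' : IsOutArb s T') (hverts : verts T = verts T')
    {d : Fin n} (hcode : arbCode T d = arbCode T' d) : T = T' := by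
  have hroot : arbRoot T d = arbRoot T' d := by
    simpa [hT.getLast?_arbCode, hT'.getLast?_arbCode] using congrArg List.getLast? hcode
  have hr := hT.isReachRoot_arbRoot d
  have hr' := hT'.isReachRoot_arbRoot d
  rw [← hroot] at hr'
  have hparent : arbParent T (arbRoot T d) = arbParent T' (arbRoot T d) := by
    refine (hT.isParentMap_arbParent hr).pruneCode_injective ?_ (notMem_erase _ _) ?_
    · simpa [hverts] using hT'.isParentMap_arbParent hr'
    · simpa [arbCode, hverts, hroot] using hcode
  rw [hT.eq_image_arbParent hr, hT'.eq_image_arbParent hr', hverts, hparent]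

end IsOutArb

/-- A Cayley-type bound: `s` vertices, then `s - 1` code entries among them. -/
theorem ncard_isOutArb_le (n s : ℕ) :
    {T : Finset (Fin n × Fin n) | IsOutArb s T}.ncard ≤ n.choose s * s ^ (s - 1) := by
  obtain hempty | ⟨T₀, hT₀⟩ := {T : Finset (Fin n × Fin n) | IsOutArb s T}.eq_empty_or_nonempty
  · simp [hempty]
  -- any vertex serves as the default value `d`
  obtain ⟨d, -⟩ := hT₀.2.2.2
  let code : Finset (Fin n × Fin n) → Fin (s - 1) → Fin n := fun T i => (arbCode T d).getD i d
  let W := ((univ : Finset (Fin n)).powersetCard s).biUnion fun S =>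
    {S} ×ˢ Fintype.piFinset fun _ : Fin (s - 1) => S
  have hmaps : ∀ T ∈ {T | IsOutArb s T}, (verts T, code T) ∈ (W : Set _) := by
    intro T hT
    simp only [W, coe_biUnion, Set.mem_iUnion, mem_coe, mem_powersetCard, mem_product,
      mem_singleton, Fintype.mem_piFinset]
    refine ⟨verts T, ⟨subset_univ _, hT.2.1⟩, rfl, fun i => ?_⟩
    have hi : (i : ℕ) < (arbCode T d).length := by rw [hT.length_arbCode]; exact i.isLt
    rw [show code T i = _ from List.getD_eq_getElem _ _ hi]
    exact hT.mem_verts_of_mem_arbCode (List.getElem_mem hi)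
  have hinj : Set.InjOn (fun T => (verts T, code T)) {T | IsOutArb s T} := by
    intro T hT T' hT' h
    obtain ⟨hverts, hcode⟩ := Prod.mk.inj h
    refine hT.eq_of_arbCode_eq hT' hverts (d := d) (List.ext_getElem ?_ fun i hi hi' => ?_)
    · rw [hT.length_arbCode, hT'.length_arbCode]
    · have := congrFun hcode ⟨i, by rwa [← hT.length_arbCode d]⟩
      rwa [show code T _ = _ from List.getD_eq_getElem _ _ hi,
        show code T' _ = _ from List.getD_eq_getElem _ _ hi'] at this
  calc {T | IsOutArb s T}.ncard ≤ (W : Set _).ncard := Set.ncard_le_ncard_of_injOn _ hmaps hinj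
    _ ≤ ∑ S ∈ univ.powersetCard s, #({S} ×ˢ Fintype.piFinset fun _ : Fin (s - 1) => S) := by
      rw [Set.ncard_coe_finset]
      exact card_biUnion_le
    _ = n.choose s * s ^ (s - 1) := by
      rw [sum_congr rfl fun S hS => by
        rw [card_product, card_singleton, one_mul, Fintype.card_piFinset_const,
          (mem_powersetCard.mp hS).2], sum_const, card_powersetCard, card_univ,
        Fintype.card_fin, smul_eq_mul]

end OutArborescence

section RandomDigraph

variable {n s : ℕ} {p : ℝ} {T : Finset (Fin n × Fin n)} {ω : (Fin n × Fin n) → Bool}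

lemma lintegral_ncard_setOf {Ω α : Type*} [MeasurableSpace Ω] [Fintype α] (μ : Measure Ω)
    (P : Ω → α → Prop) (hP : ∀ a, MeasurableSet {ω | P ω a}) :
    ∫⁻ ω, ({a | P ω a}.ncard : ENNReal) ∂μ = ∑ a, μ {ω | P ω a} := by
  classical
  have hcount : ∀ ω, ({a | P ω a}.ncard : ENNReal) = ∑ a, {ω | P ω a}.indicator 1 ω := by
    intro ω
    rw [Set.ncard_eq_toFinset_card', Set.toFinset_setOf, card_filter, Nat.cast_sum]
    refine sum_congr rfl fun a _ => ?_
    by_cases h : P ω a <;> simp [h]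
  simp_rw [hcount]
  rw [lintegral_finset_sum _ fun a _ => measurable_one.indicator (hP a)]
  simp [lintegral_indicator_one (hP _)]

instance isProbabilityMeasure_bern (p : ℝ) : IsProbabilityMeasure (bern p) := by
  unfold bern
  infer_instance

lemma bern_singleton_true (h1 : p ≤ 1) : bern p {true} = ENNReal.ofReal p := by
  rw [bern, PMF.toMeasure_apply_singleton _ _ (measurableSet_singleton _), PMF.bernoulli_apply]
  simp [min_eq_left (Real.toNNReal_le_one.mpr h1), ENNReal.ofReal]

lemma bern_singleton_false (h0 : 0 ≤ p) (h1 : p ≤ 1) :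
    bern p {false} = ENNReal.ofReal (1 - p) := by
  rw [bern, PMF.toMeasure_apply_singleton _ _ (measurableSet_singleton _), PMF.bernoulli_apply,
    cond_false, min_eq_left (Real.toNNReal_le_one.mpr h1), ENNReal.ofReal_sub _ h0,
    ENNReal.ofReal_one, ENNReal.coe_sub, ENNReal.coe_one]
  rfl

def outArcs (T : Finset (Fin n × Fin n)) : Finset (Fin n × Fin n) := verts T ×ˢ (verts T)ᶜ

def closedArbConstraint (T : Finset (Fin n × Fin n)) (a : Fin n × Fin n) : Set Bool :=
  if a ∈ T then {true} else if a ∈ outArcs T then {false} else Set.univ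

lemma disjoint_outArcs : Disjoint T (outArcs T) :=
  disjoint_left.mpr fun _ ha hout => (mem_compl.mp (mem_product.mp hout).2) (snd_mem_verts ha)

lemma isClosedOutArb_iff :
    IsClosedOutArb ω s T ↔ IsOutArb s T ∧ ω ∈ Set.univ.pi (closedArbConstraint T) := by
  simp only [IsClosedOutArb, IsOutArb, Set.mem_univ_pi, closedArbConstraint, outArcs,
    mem_product, mem_compl]
  constructor
  · rintro ⟨hpresent, hforest, hverts, hcard, hroot, hclosed⟩
    refine ⟨⟨hforest, hverts, hcard, hroot⟩, fun ⟨x, y⟩ => ?_⟩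
    split_ifs with hT hout
    · exact (hpresent _ hT).2
    · have hxy : x ≠ y := fun h => hout.2 (h ▸ hout.1)
      by_contra h
      exact hout.2 (hclosed x y ⟨hxy, by simpa using h⟩ hout.1)
    · trivial
  · rintro ⟨⟨hforest, hverts, hcard, hroot⟩, hω⟩
    refine ⟨fun a ha => ⟨(hforest.2.1 a ha).1, ?_⟩, hforest, hverts, hcard, hroot, ?_⟩
    · simpa [ha] using hω a
    · intro x y hxy hx
      by_contra hy
      have hT : (x, y) ∉ T := fun h => hy (snd_mem_verts h)
      simpa [hT, hx, hy, hxy.2] using hω (x, y)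

lemma dnp_pi_closedArbConstraint (hT : IsOutArb s T) (h0 : 0 ≤ p) (h1 : p ≤ 1) :
    Dnp n p (Set.univ.pi (closedArbConstraint T)) =
      ENNReal.ofReal p ^ (s - 1) * ENNReal.ofReal (1 - p) ^ (s * (n - s)) := by
  have hoff : ∀ a ∉ T ∪ outArcs T, bern p (closedArbConstraint T a) = 1 := by
    intro a ha
    rw [mem_union, not_or] at ha
    rw [closedArbConstraint, if_neg ha.1, if_neg ha.2, measure_univ]
  have hcard : #(outArcs T) = s * (n - s) := by
    rw [outArcs, card_product, card_compl, Fintype.card_fin, hT.2.1]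
  have hpresent : ∀ a ∈ T, bern p (closedArbConstraint T a) = ENNReal.ofReal p := by
    intro a ha
    rw [closedArbConstraint, if_pos ha, bern_singleton_true h1]
  have habsent : ∀ a ∈ outArcs T, bern p (closedArbConstraint T a) = ENNReal.ofReal (1 - p) := by
    intro a ha
    rw [closedArbConstraint, if_neg (disjoint_right.mp disjoint_outArcs ha), if_pos ha,
      bern_singleton_false h0 h1]
  rw [Dnp, Measure.pi_pi, ← prod_subset (subset_univ _) fun a _ => hoff a,
    prod_union disjoint_outArcs, prod_congr rfl hpresent, prod_congr rfl habsent, prod_const,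
    prod_const, hT.2.2.1, hcard]

lemma lintegral_ncard_isClosedOutArb (h0 : 0 ≤ p) (h1 : p ≤ 1) :
    ∫⁻ ω, ({T : Finset (Fin n × Fin n) | IsClosedOutArb ω s T}.ncard : ENNReal) ∂ Dnp n p =
      {T : Finset (Fin n × Fin n) | IsOutArb s T}.ncard *
        (ENNReal.ofReal p ^ (s - 1) * ENNReal.ofReal (1 - p) ^ (s * (n - s))) := by
  classical
  rw [lintegral_ncard_setOf _ _ fun _ => (Set.toFinite _).measurableSet]
  have hevent : ∀ T : Finset (Fin n × Fin n), Dnp n p {ω | IsClosedOutArb ω s T} =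
      if IsOutArb s T then
        ENNReal.ofReal p ^ (s - 1) * ENNReal.ofReal (1 - p) ^ (s * (n - s)) else 0 := by
    intro T
    split_ifs with hT
    · rw [← dnp_pi_closedArbConstraint hT h0 h1]
      exact congrArg _ (Set.ext fun ω => isClosedOutArb_iff.trans (and_iff_right hT))
    · simp [isClosedOutArb_iff, hT]
  simp [hevent, sum_ite, Set.ncard_eq_toFinset_card']

lemma lintegral_ncard_isClosedOutArb_le (h0 : 0 ≤ p) (h1 : p ≤ 1) :
    ∫⁻ ω, ({T : Finset (Fin n × Fin n) | IsClosedOutArb ω s T}.ncard : ENNReal) ∂ Dnp n p ≤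
      ENNReal.ofReal (n.choose s * s ^ (s - 1) * p ^ (s - 1) * (1 - p) ^ (s * (n - s))) := by
  rw [lintegral_ncard_isClosedOutArb h0 h1, ENNReal.ofReal_mul (by positivity),
    ENNReal.ofReal_mul (by positivity), ENNReal.ofReal_pow h0, ENNReal.ofReal_pow (by linarith),
    mul_assoc _ (ENNReal.ofReal p ^ _)]
  gcongr
  exact_mod_cast ncard_isOutArb_le n s

end RandomDigraph

section Estimate

open Real
open scoped Nat

lemma choose_mul_pow_mul_le {c : ℝ} (hc : 0 < c) {n s : ℕ} (hn : c ≤ n) (hs : 1 ≤ s)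
    (hsn : s ≤ n) :
    n.choose s * (s : ℝ) ^ (s - 1) * (c / n) ^ (s - 1) * (1 - c / n) ^ (s * (n - s)) ≤
      n / (s * c) * exp (1 - c + c * s / n + log c) ^ s := by
  have hn0 : (0 : ℝ) < n := hc.trans_le hn
  have hq0 : 0 ≤ 1 - c / n := by rw [sub_nonneg, div_le_one hn0]; exact hn
  have hdecay : (1 - c / n) ^ (s * (n - s)) ≤ exp (-(c / n)) ^ (s * (n - s)) :=
    pow_le_pow_left₀ hq0 (by linarith [add_one_le_exp (-(c / n))]) _
  have hrhs : exp (1 - c + c * s / n + log c) ^ s =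
      exp s * (c ^ s * exp (-(c / n)) ^ (s * (n - s))) := by
    rw [← exp_log hc, ← exp_nat_mul, ← exp_nat_mul, ← exp_nat_mul, ← exp_add, ← exp_add,
      exp_log hc]
    congr 1
    push_cast [Nat.cast_sub hsn]
    field_simp
    ring
  have halg : (n : ℝ) ^ s / s ! * (s : ℝ) ^ (s - 1) * (c / n) ^ (s - 1) =
      (s : ℝ) ^ s / s ! * (n / (s * c) * c ^ s) := by
    have hpow : ∀ x : ℝ, x ^ s = x * x ^ (s - 1) := fun x => by
      rw [← pow_succ', Nat.sub_add_cancel hs]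
    rw [hpow, hpow (s : ℝ), hpow c, div_pow]
    field_simp
  calc
    _ ≤ (n : ℝ) ^ s / s ! * (s : ℝ) ^ (s - 1) * (c / n) ^ (s - 1) *
        exp (-(c / n)) ^ (s * (n - s)) := by
      gcongr
      exact Nat.choose_le_pow_div _ _
    _ = (s : ℝ) ^ s / s ! * (n / (s * c) * (c ^ s * exp (-(c / n)) ^ (s * (n - s)))) := by
      rw [halg]
      ring
    _ ≤ exp s * (n / (s * c) * (c ^ s * exp (-(c / n)) ^ (s * (n - s)))) := by
      gcongr
      exact pow_div_factorial_le_exp _ (Nat.cast_nonneg _) _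
    _ = n / (s * c) * exp (1 - c + c * s / n + log c) ^ s := by
      rw [hrhs]
      ring

lemma exp_pow_le_of_le_beta {c x y : ℝ} (hc : 0 < c) (hy : 0 < y) (s : ℕ)
    (hx : x ≤ (1 - 1.1 / c - log c / c) * y) :
    exp (1 - c + c * x / y + log c) ^ s ≤ exp (-(s : ℝ) / 10) := by
  have hxy : c * x / y ≤ c - 1.1 - log c := by
    rw [div_le_iff₀ hy]
    have := mul_le_mul_of_nonneg_left hx hc.le
    field_simp at this
    linarith
  rw [← exp_nat_mul]
  exact exp_le_exp.mpr (by nlinarith [s.cast_nonneg (α := ℝ)])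

end Estimate

/-- First-moment bound: for `p = c/n`, the expected number of out-arborescences
on `s` vertices with no arcs leaving them is at most
`(n/(sc)) · (e^{1 - c + cs/n + ln c})^s`; in particular, for
`10 log n ≤ s ≤ βn` with `β = 1 - 1.1/c - (ln c)/c` it is at most
`(n/(sc)) · e^{-s/10}`, i.e. `1/poly(n)`. -/
theorem stmt10 (c : ℝ) (hc : 1 < c) (n s : ℕ) (hn : c ≤ n) (hs1 : 1 ≤ s) (hsn : s ≤ n) :
    (∫⁻ ω, ({T : Finset (Fin n × Fin n) | IsClosedOutArb ω s T}.ncard : ENNReal)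
        ∂ Dnp n (c / n)) ≤
      ENNReal.ofReal
        ((n / (s * c)) * Real.exp (1 - c + c * s / n + Real.log c) ^ s) ∧
    (10 * Real.log n ≤ s → (s : ℝ) ≤ (1 - 1.1 / c - Real.log c / c) * n →
      (∫⁻ ω, ({T : Finset (Fin n × Fin n) | IsClosedOutArb ω s T}.ncard : ENNReal)
          ∂ Dnp n (c / n)) ≤
        ENNReal.ofReal ((n / (s * c)) * Real.exp (-(s : ℝ) / 10))) := by
  have hc0 : 0 < c := by linarith
  have hn0 : (0 : ℝ) < n := hc0.trans_le hn
  have hp1 : c / n ≤ 1 := (div_le_one hn0).mpr hn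
  have hmain := (lintegral_ncard_isClosedOutArb_le (by positivity) hp1).trans
    (ENNReal.ofReal_le_ofReal (choose_mul_pow_mul_le hc0 hn hs1 hsn))
  refine ⟨hmain, fun _ hβ => hmain.trans (ENNReal.ofReal_le_ofReal ?_)⟩
  gcongr
  exact exp_pow_le_of_le_beta hc0 hn0 s hβ
end

section
/- Suppose a maximum arborescence forest F of digraph G is updated along a feasible path P from root r to root r' after inserting arc a = (u, v), producing F' = UPDATE(F, P). Then v lies in the in-component of r' in G, and the number of deleted arcs satisfies |F \ F'| ≤ |T'|, where T' is the arborescence of r' in F. -/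
/-!
Since `P` is a simple path, the arc `(u, v)` occurs on it once, so the part of `P` after it is a
path in `G` from `v` to `r'`. `UPDATE` deletes only parent arcs of vertices of `P`. For a vertex
inside `P_A` the parent arc is, by in-degree at most one, the arc of `P` entering it, which is
added back; so every deleted arc is the parent arc of a vertex of `P_V ⊆ T'`, and distinct
deleted arcs have distinct heads.
-/

open Finset

variable {V : Type*} [Fintype V] [DecidableEq V]

namespace List

variable {α : Type*}

theorem mem_zip_tail_iff {x y : α} {l : List α} :
    (x, y) ∈ l.zip l.tail ↔ ∃ s t, l = s ++ x :: y :: t := by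
  induction l with
  | nil => simp
  | cons a l ih =>
    cases l with
    | nil =>
        simp only [tail_cons, zip_nil_right, not_mem_nil, false_iff]
        rintro ⟨_ | ⟨_, _ | _⟩, t, h⟩ <;> simp at h
    | cons b l =>
      simp only [tail_cons, zip_cons_cons, mem_cons, Prod.mk.injEq] at ih ⊢
      constructor
      · rintro (⟨rfl, rfl⟩ | h)
        · exact ⟨[], l, rfl⟩
        · obtain ⟨s, t, hst⟩ := ih.mp h
          exact ⟨a :: s, t, by rw [hst, cons_append]⟩
      · rintro ⟨_ | ⟨c, s⟩, t, hst⟩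
        · simp_all
        · rw [cons_append, cons.injEq] at hst
          obtain ⟨rfl, hst⟩ := hst
          exact Or.inr (ih.mpr ⟨s, t, hst⟩)

theorem zip_tail_subset_append (l₁ l₂ : List α) :
    l₁.zip l₁.tail ⊆ (l₁ ++ l₂).zip (l₁ ++ l₂).tail := by
  rintro ⟨x, y⟩ h
  obtain ⟨s, t, rfl⟩ := mem_zip_tail_iff.mp h
  exact mem_zip_tail_iff.mpr ⟨s, t ++ l₂, by simp⟩

theorem exists_mem_zip_tail_of_mem_tail {w : α} {l : List α} (h : w ∈ l.tail) :
    ∃ x, (x, w) ∈ l.zip l.tail := by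
  cases l with
  | nil => simp at h
  | cons a l =>
    obtain ⟨s, t, rfl⟩ := append_of_mem (l := l) h
    obtain ⟨L, b, hLb⟩ := (eq_nil_or_concat (a :: s)).resolve_left (cons_ne_nil a s)
    refine ⟨b, mem_zip_tail_iff.mpr ⟨L, t, ?_⟩⟩
    rw [← cons_append, hLb, concat_eq_append, append_assoc, singleton_append]

theorem mem_tail_append {w : α} {l₁ l₂ : List α} (h : w ∈ (l₁ ++ l₂).tail) :
    w ∈ l₁.tail ∨ w ∈ l₂ := by
  cases l₁ with
  | nil => exact Or.inr (mem_of_mem_tail h)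
  | cons a l₁ => simpa using h

theorem IsChain.of_insert_of_notMem [DecidableEq α] {G : Finset (α × α)} {u v : α} {l : List α}
    (h : l.IsChain fun x y => (x, y) ∈ insert (u, v) G) (hu : u ∉ l) :
    l.IsChain fun x y => (x, y) ∈ G :=
  h.imp_of_mem_imp fun _ _ ha _ hab =>
    (Finset.mem_insert.mp hab).resolve_left fun h => by
      obtain ⟨rfl, -⟩ := Prod.mk.inj h
      exact hu ha

end List

omit [Fintype V] in
theorem eq_of_inDeg_le_one_s16 {F : Finset (V × V)} {w x y : V} (hw : inDeg F w ≤ 1)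
    (hx : (x, w) ∈ F) (hy : (y, w) ∈ F) : x = y :=
  (Prod.mk.inj (Finset.card_le_one.mp hw _ (mem_filter.mpr ⟨hx, rfl⟩) _
    (mem_filter.mpr ⟨hy, rfl⟩))).1

omit [Fintype V] in
theorem reach_of_mem_pathArcs {G : Finset (V × V)} {u v r' : V} {p : List V}
    (hp : IsDiPath (insert (u, v) G) p) (hlast : p.getLast? = some r')
    (huv : (u, v) ∈ pathArcs p) : Reach G v r' := by
  obtain ⟨hchain, hnodup⟩ := hp
  obtain ⟨s, t, rfl⟩ := List.mem_zip_tail_iff.mp (List.mem_toFinset.mp huv)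
  have hsplit : s ++ u :: v :: t = (s ++ [u]) ++ v :: t := by simp
  rw [hsplit] at hchain hnodup hlast
  have hu : u ∉ v :: t := fun h => List.disjoint_of_nodup_append hnodup (by simp) h
  have hchain' := (hchain.suffix (List.suffix_append _ _)).of_insert_of_notMem hu
  rw [List.getLast?_append_of_ne_nil _ (List.cons_ne_nil v t),
    List.getLast?_eq_some_getLast (List.cons_ne_nil v t), Option.some_inj] at hlast
  exact List.relationReflTransGen_of_exists_isChain_cons t hchain' hlast

omit [Fintype V] in
theorem snd_mem_of_mem_sdiff_update {F : Finset (V × V)} (hF : ∀ w, inDeg F w ≤ 1)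
    {p₁ p₂ : List V} (hp₁ : pathArcs p₁ ⊆ F) {a : V × V} (ha : a ∈ F \ update F (p₁ ++ p₂)) :
    a.2 ∈ p₂ := by
  obtain ⟨x, w⟩ := a
  simp only [update, mem_sdiff, mem_union, mem_filter, not_or, not_and, not_not] at ha
  obtain ⟨hxw, hw, hnotArc⟩ := ha
  refine (List.mem_tail_append (hw hxw)).resolve_left fun hw₁ => hnotArc ?_
  obtain ⟨y, hy⟩ := List.exists_mem_zip_tail_of_mem_tail hw₁
  have hyw : (y, w) ∈ pathArcs p₁ := List.mem_toFinset.mpr hy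
  rw [eq_of_inDeg_le_one_s16 (hF w) hxw (hp₁ hyw)]
  exact List.mem_toFinset.mpr (List.zip_tail_subset_append p₁ p₂ hy)

theorem card_le_ncard_of_forall_snd_mem {F D : Finset (V × V)} {S : Set V}
    (hF : ∀ w, inDeg F w ≤ 1) (hD : D ⊆ F) (hS : ∀ a ∈ D, a.2 ∈ S) : D.card ≤ S.ncard := by
  rw [← Set.ncard_coe_finset]
  refine Set.ncard_le_ncard_of_injOn Prod.snd hS ?_ (Set.toFinite S)
  rintro ⟨x, w⟩ hx ⟨y, w'⟩ hy (rfl : w = w')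
  rw [eq_of_inDeg_le_one_s16 (hF w) (hD hx) (hD hy)]

theorem stmt16_general (G F : Finset (V × V)) (u v r r' : V) (p : List V)
    (hF : IsMaxArbForest G F)
    (hp : FeasiblePath (insert (u, v) G) F r r' p)
    (hmem : (u, v) ∈ pathArcs p) :
    Reach G v r' ∧ (F \ update F p).card ≤ {w : V | WReach F r' w}.ncard := by
  obtain ⟨hpath, -, hlast, p₁, p₂, rfl, hp₁, hp₂⟩ := hp
  have hdeg : ∀ w, inDeg F w ≤ 1 := hF.2.1.1
  have hdeleted (a) (ha : a ∈ F \ update F (p₁ ++ p₂)) : a.2 ∈ p₂ :=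
    snd_mem_of_mem_sdiff_update hdeg (fun b hb => (hp₁ b hb).1) ha
  exact ⟨reach_of_mem_pathArcs hpath hlast hmem,
    card_le_ncard_of_forall_snd_mem hdeg sdiff_subset fun a ha => hp₂ _ (hdeleted a ha)⟩

/-- If a maximum arborescence forest `F` of `G` is updated along a feasible path
`p` from root `r` to root `r'` created by inserting arc `a = (u, v)`, then `v`
lies in the in-component of `r'` in `G`, and the number of deleted arcs is at
most the number of vertices of the arborescence `T'` of `r'` in `F`. -/
theorem stmt16 (G F : Finset (V × V)) (u v r r' : V) (p : List V)
    (hF : IsMaxArbForest G F) (ha : (u, v) ∉ G) (hrr : r ≠ r')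
    (hr : IsRoot F r) (hr' : IsRoot F r')
    (hp : FeasiblePath (insert (u, v) G) F r r' p)
    (hmem : (u, v) ∈ pathArcs p) :
    Reach G v r' ∧ (F \ update F p).card ≤ {w : V | WReach F r' w}.ncard :=
  stmt16_general G F u v r r' p hF hp hmem
end
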